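/- arXiv:1911.10430 — 3 statements merged into one kernel-verified Lean document; each statement's English description precedes it below -/
import Mathlib

section
/- For a standard (p)-tableau T_0 of shape ((p), λ), the sum of X^{T^+} over all semistandard (p)-tableaux T of shape ((p), λ) with entries in [M] whose standardization equals T_0 is the weak composition fundamental quasisymmetric function F̃_{comp(T_0)}(X). -/
open MvPolynomial Finset Equiv

attribute [local instance] Classical.propDecidable

noncomputable section

/-! ### Type A fundamental quasisymmetric functions -/

/-- A weakly increasing sequence of length `n` in `[M]` with strict increases at
positions in `I` (positions are 1-indexed: `k ∈ I` forces strictness between the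
`k`-th and `(k+1)`-st entries, i.e. between 0-indexed entries `k-1` and `k`). -/
def seqOK (n M : ℕ) (I : Finset ℕ) (g : Fin n → Fin M) : Prop :=
  ∀ i j : Fin n, (i : ℕ) + 1 = (j : ℕ) → (g i ≤ g j ∧ ((j : ℕ) ∈ I → g i < g j))

/-- Gessel's fundamental quasisymmetric function `F_I` on the alphabet `x_1,…,x_M`. -/
def Fqsym (M n : ℕ) (I : Finset ℕ) : MvPolynomial (Fin M) ℤ :=
  ∑ g ∈ Finset.univ.filter (seqOK n M I), ∏ i, X (g i)

/-- Descent set of a permutation written as the word `π(1) … π(n)`: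
`k` is a descent iff `π(k) > π(k+1)` (1-indexed values, `k ∈ [1, n-1]`). -/
def desPerm {n : ℕ} (α : Equiv.Perm (Fin n)) : Finset ℕ :=
  (Finset.range n).filter fun k =>
    ∃ i j : Fin n, (i : ℕ) + 1 = (j : ℕ) ∧ (j : ℕ) = k ∧ α j < α i

/-- `γ` is a shuffle of the word `α` with the word `β` shifted up by `n`. -/
def IsShuffle {n m : ℕ} (α : Equiv.Perm (Fin n)) (β : Equiv.Perm (Fin m))
    (γ : Equiv.Perm (Fin (n + m))) : Prop :=
  ∃ φ : Fin n → Fin (n + m), ∃ ψ : Fin m → Fin (n + m),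
    (∀ a b : Fin n, a < b → φ a < φ b) ∧
    (∀ a b : Fin m, a < b → ψ a < ψ b) ∧
    (∀ i, (γ (φ i) : ℕ) = (α i : ℕ)) ∧
    (∀ j, (γ (ψ j) : ℕ) = n + (β j : ℕ)) ∧
    (∀ k, (∃ i, φ i = k) ∨ (∃ j, ψ j = k))

/-! ### Young tableaux -/

/-- Semistandard Young tableau of shape `μ` with entries in `Fin M`. -/
def IsSSYT {μ : YoungDiagram} {M : ℕ} (f : ↥μ.cells → Fin M) : Prop :=
  (∀ c d : ↥μ.cells, (c : ℕ × ℕ).1 = (d : ℕ × ℕ).1 → (c : ℕ × ℕ).2 ≤ (d : ℕ × ℕ).2 →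
      f c ≤ f d) ∧
  (∀ c d : ↥μ.cells, (c : ℕ × ℕ).2 = (d : ℕ × ℕ).2 → (c : ℕ × ℕ).1 < (d : ℕ × ℕ).1 →
      f c < f d)

/-- The Schur polynomial in `M` variables: generating function of SSYT of shape `μ`. -/
def schurPoly (M : ℕ) (μ : YoungDiagram) : MvPolynomial (Fin M) ℤ :=
  ∑ f ∈ Finset.univ.filter (fun f : ↥μ.cells → Fin M => IsSSYT f), ∏ c, X (f c)

/-- Standard Young tableau of shape `μ` (with `μ.card = n`), labels `Fin n`. -/
def IsSYT {μ : YoungDiagram} {n : ℕ} (f : ↥μ.cells → Fin n) : Prop :=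
  Function.Bijective f ∧
  (∀ c d : ↥μ.cells, (c : ℕ × ℕ).1 = (d : ℕ × ℕ).1 → (c : ℕ × ℕ).2 < (d : ℕ × ℕ).2 →
      f c < f d) ∧
  (∀ c d : ↥μ.cells, (c : ℕ × ℕ).2 = (d : ℕ × ℕ).2 → (c : ℕ × ℕ).1 < (d : ℕ × ℕ).1 →
      f c < f d)

/-- Descent set of a standard Young tableau: `k` is a descent iff the label `k+1`
(1-indexed) lies in a strictly lower row than the label `k`. -/
def desSYT {μ : YoungDiagram} {n : ℕ} (f : ↥μ.cells → Fin n) : Finset ℕ :=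
  (Finset.range n).filter fun k =>
    ∃ c d : ↥μ.cells, (f c : ℕ) + 1 = k ∧ (f d : ℕ) = k ∧ (c : ℕ × ℕ).1 < (d : ℕ × ℕ).1

/-- `g` is the standardization of the semistandard tableau `f` (ties among equal
entries broken from left to right, i.e. by column). -/
def Standardizes {μ : YoungDiagram} {M n : ℕ} (f : ↥μ.cells → Fin M)
    (g : ↥μ.cells → Fin n) : Prop :=
  ∀ c d : ↥μ.cells,
    g c < g d ↔ (f c < f d ∨ (f c = f d ∧ (c : ℕ × ℕ).2 < (d : ℕ × ℕ).2))

/-! ### Weak composition quasisymmetric functions -/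

/-- Expansion of a weak composition into "slots": each zero part contributes one
slot of exponent `0`, each positive part `s` contributes `s` slots of exponent `1`. -/
def wcSlots (α : List ℕ) : List ℕ :=
  α.flatMap fun s => if s = 0 then [0] else List.replicate s 1

def wcDesAux : List ℕ → ℕ → List ℕ
  | [], _ => []
  | s :: rest, c => if s = 0 then wcDesAux rest (c + 1) else (c + s) :: wcDesAux rest (c + s)

/-- The descent set `D(α)` of a weak composition `α`. -/
def wcDes (α : List ℕ) : Finset ℕ := (wcDesAux α 0).toFinset

/-- The weak composition fundamental quasisymmetric function `F̃_α` on `x_1,…,x_M`. -/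
def wcF (M : ℕ) (α : List ℕ) : MvPolynomial (Fin M) ℤ :=
  ∑ g ∈ Finset.univ.filter (seqOK (wcSlots α).length M (wcDes α)),
    ∏ t : Fin (wcSlots α).length, X (g t) ^ (wcSlots α).get t

/-! ### Coloured permutations -/

/-- Order key for a coloured letter: overlined letters `(true, v)` come first
(ordered by value), then non-overlined letters `(false, v)`. -/
def cOrd (L : ℕ) (x : Bool × ℕ) : ℕ := if x.1 then x.2 else 2 * L + x.2

/-- Generating function `Γ(π)` of `P_π`-partitions for a coloured permutation,
given as a word `w` of letters `(overlined?, value)`. -/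
def GammaC (M : ℕ) (w : List (Bool × ℕ)) : MvPolynomial (Fin M) ℤ :=
  ∑ f ∈ Finset.univ.filter (fun f : Fin w.length → Fin M =>
      ∀ i j : Fin w.length, (i : ℕ) + 1 = (j : ℕ) →
        (f i ≤ f j ∧ (cOrd w.length (w.get j) < cOrd w.length (w.get i) → f i < f j))),
    ∏ i, X (f i) ^ (if (w.get i).1 then 0 else 1)

/-- The weak composition `comp(π)` of a coloured permutation word: overlined letters
give zero parts, maximal increasing runs of non-overlined letters give positive parts. -/
def compC : List (Bool × ℕ) → List ℕ
  | [] => []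
  | (true, _) :: rest => 0 :: compC rest
  | (false, v) :: rest =>
    match rest with
    | (false, w) :: _ =>
      if v < w then
        match compC rest with
        | [] => [1]
        | s :: t => (s + 1) :: t
      else 1 :: compC rest
    | _ => 1 :: compC rest

/-! ### Standard and semistandard (p)-tableaux -/

/-- Standard `(p)`-tableau of shape `((p), μ)` with `μ.card = n`: a strictly
increasing row `a` of length `p` and a standard filling `f` of `μ`, jointly
bijective onto `[n+p]`. -/
def IsSBT {μ : YoungDiagram} {p n : ℕ} (a : Fin p → Fin (n + p))
    (f : ↥μ.cells → Fin (n + p)) : Prop :=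
  (∀ i j : Fin p, i < j → a i < a j) ∧
  Function.Injective f ∧
  (∀ (i : Fin p) (c : ↥μ.cells), a i ≠ f c) ∧
  (∀ c d : ↥μ.cells, (c : ℕ × ℕ).1 = (d : ℕ × ℕ).1 → (c : ℕ × ℕ).2 < (d : ℕ × ℕ).2 →
      f c < f d) ∧
  (∀ c d : ↥μ.cells, (c : ℕ × ℕ).2 = (d : ℕ × ℕ).2 → (c : ℕ × ℕ).1 < (d : ℕ × ℕ).1 →
      f c < f d)

/-- Row of the cell of `T⁺` labelled `t` (junk value `0` if `t` labels `T⁻`). -/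
def rowOfLabel {μ : YoungDiagram} {N : ℕ} (f : ↥μ.cells → Fin N) (t : ℕ) : ℕ :=
  ∑ c ∈ Finset.univ.filter (fun c : ↥μ.cells => (f c : ℕ) = t), (c : ℕ × ℕ).1

/-- Slot list of a standard `(p)`-tableau: for each label `t = 0,…,n+p-1`, `none`
if `t` lies in `T⁻`, and `some r` if `t` lies in row `r` of `T⁺`. -/
def slotsSBT {μ : YoungDiagram} {p n : ℕ} (a : Fin p → Fin (n + p))
    (f : ↥μ.cells → Fin (n + p)) : List (Option ℕ) :=
  (List.range (n + p)).map fun t =>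
    if ∃ i : Fin p, (a i : ℕ) = t then none else some (rowOfLabel f t)

/-- Parse a slot list into a weak composition: `none` slots give zero parts,
maximal runs of `some` slots with no descent (no row increase) give positive parts. -/
def compOfSlots : List (Option ℕ) → List ℕ
  | [] => []
  | none :: rest => 0 :: compOfSlots rest
  | some r :: rest =>
    match rest with
    | some r' :: _ =>
      if r < r' then 1 :: compOfSlots rest
      else
        match compOfSlots rest with
        | [] => [1]
        | s :: t => (s + 1) :: t
    | _ => 1 :: compOfSlots rest

/-- The weak composition `comp(T)` of a standard `(p)`-tableau `T = (a, f)`. -/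
def compSBT {μ : YoungDiagram} {p n : ℕ} (a : Fin p → Fin (n + p))
    (f : ↥μ.cells → Fin (n + p)) : List ℕ :=
  compOfSlots (slotsSBT a f)

/-- `(a, b)` (standard) is the standardization of the semistandard `(p)`-tableau
`(g, f)`: order is preserved, ties broken by relabelling `T⁻` first, and within
each tableau from left to right. -/
def StdSBT {μ : YoungDiagram} {M p n : ℕ} (g : Fin p → Fin M) (f : ↥μ.cells → Fin M)
    (a : Fin p → Fin (n + p)) (b : ↥μ.cells → Fin (n + p)) : Prop :=
  (∀ i j : Fin p, a i < a j ↔ (g i < g j ∨ (g i = g j ∧ i < j))) ∧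
  (∀ c d : ↥μ.cells, b c < b d ↔ (f c < f d ∨ (f c = f d ∧ (c : ℕ × ℕ).2 < (d : ℕ × ℕ).2))) ∧
  (∀ (i : Fin p) (c : ↥μ.cells), a i < b c ↔ g i ≤ f c) ∧
  (∀ (c : ↥μ.cells) (i : Fin p), b c < a i ↔ f c < g i)

/-! ### Chow's type B quasisymmetric functions and signed permutations -/

/-- Type B admissible sequence: `0 = i_0 ≤ i_1 ≤ … ≤ i_n` with `i_j < i_{j+1}`
for `j ∈ I` (the alphabet is `x_0, x_1, …, x_M`, i.e. `Fin (M+1)`). -/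
def seqOKB (n : ℕ) {M : ℕ} (I : Finset ℕ) (g : Fin n → Fin (M + 1)) : Prop :=
  (∀ i j : Fin n, (i : ℕ) + 1 = (j : ℕ) → (g i ≤ g j ∧ ((j : ℕ) ∈ I → g i < g j))) ∧
  (∀ j : Fin n, (j : ℕ) = 0 → (0 : ℕ) ∈ I → (0 : Fin (M + 1)) < g j)

/-- Chow's type B fundamental quasisymmetric function `F^B_I`, with variables
embedded into an ambient variable set via `v`. -/
def FB (R : Type*) [CommRing R] {σ : Type*} (M n : ℕ) (I : Finset ℕ)
    (v : Fin (M + 1) → σ) : MvPolynomial σ R :=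
  ∑ g ∈ Finset.univ.filter (seqOKB n I), ∏ i, X (v (g i))

/-- A signed permutation of `[n]`: an (unsigned) permutation together with signs. -/
abbrev SPerm (n : ℕ) := Equiv.Perm (Fin n) × (Fin n → Bool)

/-- The value `π(i) ∈ ±[n]` of a signed permutation at position `i`. -/
def sval {n : ℕ} (π : SPerm n) (i : Fin n) : ℤ :=
  if π.2 i then -((π.1 i : ℤ) + 1) else (π.1 i : ℤ) + 1

/-- Type B descent set: `0` is a descent iff `π(1) < 0`; `k ≥ 1` is a descent iff
`π(k) > π(k+1)`. -/
def desB {n : ℕ} (π : SPerm n) : Finset ℕ :=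
  (Finset.range n).filter fun k =>
    (k = 0 ∧ ∃ j : Fin n, (j : ℕ) = 0 ∧ sval π j < 0) ∨
    (∃ i j : Fin n, (i : ℕ) + 1 = (j : ℕ) ∧ (j : ℕ) = k ∧ sval π j < sval π i)

/-- Total colour: the number of negative values. -/
def tcB {n : ℕ} (π : SPerm n) : ℕ := (Finset.univ.filter fun i => π.2 i).card

/-- The inverse of a signed permutation. -/
def invB {n : ℕ} (π : SPerm n) : SPerm n := (π.1⁻¹, fun j => π.2 (π.1⁻¹ j))

/-- Signed shuffle: `γ` is obtained by interleaving `α` with `β` whose letters'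
absolute values are shifted by `n` (signs preserved). -/
def IsShuffleB {n m : ℕ} (α : SPerm n) (β : SPerm m) (γ : SPerm (n + m)) : Prop :=
  ∃ φ : Fin n → Fin (n + m), ∃ ψ : Fin m → Fin (n + m),
    (∀ a b : Fin n, a < b → φ a < φ b) ∧
    (∀ a b : Fin m, a < b → ψ a < ψ b) ∧
    (∀ i, sval γ (φ i) = sval α i) ∧
    (∀ j, sval γ (ψ j) = sval β j + (if 0 < sval β j then (n : ℤ) else -(n : ℤ))) ∧
    (∀ k, (∃ i, φ i = k) ∨ (∃ j, ψ j = k))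

/-! ### Domino tableaux -/

/-- Two cells are adjacent (horizontally or vertically). -/
def AdjCell (c d : ℕ × ℕ) : Prop :=
  (c.1 = d.1 ∧ (c.2 + 1 = d.2 ∨ d.2 + 1 = c.2)) ∨
  (c.2 = d.2 ∧ (c.1 + 1 = d.1 ∨ d.1 + 1 = c.1))

/-- A perfect matching of the cells of `μ` into dominoes. -/
def IsPairing {μ : YoungDiagram} (m : ↥μ.cells → ↥μ.cells) : Prop :=
  ∀ c, m c ≠ c ∧ m (m c) = c ∧ AdjCell (c : ℕ × ℕ) (m c : ℕ × ℕ)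

/-- Standard domino tableau of shape `μ` (with `μ.card = 2n`): a domino tiling
together with a bijective labelling of the dominoes by `[n]`, weakly increasing
along rows and columns. -/
def IsSDT {μ : YoungDiagram} {n : ℕ}
    (T : (↥μ.cells → Fin n) × (↥μ.cells → ↥μ.cells)) : Prop :=
  IsPairing T.2 ∧ (∀ c, T.1 (T.2 c) = T.1 c) ∧
  (∀ c d, T.1 c = T.1 d → d = c ∨ d = T.2 c) ∧
  (∀ c d : ↥μ.cells, (c : ℕ × ℕ).1 = (d : ℕ × ℕ).1 → (c : ℕ × ℕ).2 ≤ (d : ℕ × ℕ).2 →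
      T.1 c ≤ T.1 d) ∧
  (∀ c d : ↥μ.cells, (c : ℕ × ℕ).2 = (d : ℕ × ℕ).2 → (c : ℕ × ℕ).1 ≤ (d : ℕ × ℕ).1 →
      T.1 c ≤ T.1 d)

/-- Descent set of a standard domino tableau: `0` is a descent iff the domino
labelled `1` is vertical; `k ≥ 1` is a descent iff the domino labelled `k+1` lies
strictly below the domino labelled `k`. -/
def desSDT {μ : YoungDiagram} {n : ℕ}
    (T : (↥μ.cells → Fin n) × (↥μ.cells → ↥μ.cells)) : Finset ℕ :=
  (Finset.range n).filter fun k =>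
    (k = 0 ∧ ∃ c : ↥μ.cells, (T.1 c : ℕ) = 0 ∧ ((T.2 c : ℕ × ℕ).2 = (c : ℕ × ℕ).2)) ∨
    (∃ i j : Fin n, (i : ℕ) + 1 = (j : ℕ) ∧ (j : ℕ) = k ∧
      ∀ c d : ↥μ.cells, T.1 c = i → T.1 d = j → (c : ℕ × ℕ).1 < (d : ℕ × ℕ).1)

/-- Number of vertical dominoes of a tiling. -/
def nvert {μ : YoungDiagram} (m : ↥μ.cells → ↥μ.cells) : ℕ :=
  (Finset.univ.filter fun c : ↥μ.cells => (m c : ℕ × ℕ).2 = (c : ℕ × ℕ).2).card / 2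

/-- Semistandard domino tableau with labels in `{0, 1, …, M}`: weakly increasing
along rows, strictly increasing down columns except inside a vertical domino, and
a vertical top-leftmost domino cannot be labelled `0`. -/
def IsSSDT {μ : YoungDiagram} {M : ℕ}
    (T : (↥μ.cells → Fin (M + 1)) × (↥μ.cells → ↥μ.cells)) : Prop :=
  IsPairing T.2 ∧ (∀ c, T.1 (T.2 c) = T.1 c) ∧
  (∀ c d : ↥μ.cells, (c : ℕ × ℕ).1 = (d : ℕ × ℕ).1 → (c : ℕ × ℕ).2 ≤ (d : ℕ × ℕ).2 →
      T.1 c ≤ T.1 d) ∧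
  (∀ c d : ↥μ.cells, (c : ℕ × ℕ).2 = (d : ℕ × ℕ).2 → (c : ℕ × ℕ).1 < (d : ℕ × ℕ).1 →
      (T.1 c < T.1 d ∨ d = T.2 c)) ∧
  (∀ c : ↥μ.cells, (c : ℕ × ℕ) = (0, 0) → (T.2 c : ℕ × ℕ).2 = (c : ℕ × ℕ).2 → T.1 c ≠ 0)

/-- The monomial `X^T` of a semistandard domino tableau: one variable per domino
(choosing the cell of smaller coordinate sum as representative). -/
def dominoMonomial {μ : YoungDiagram} {M : ℕ}
    (T : (↥μ.cells → Fin (M + 1)) × (↥μ.cells → ↥μ.cells)) :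
    MvPolynomial (Fin (M + 1)) ℤ :=
  ∏ c ∈ Finset.univ.filter (fun c : ↥μ.cells =>
      (c : ℕ × ℕ).1 + (c : ℕ × ℕ).2 < (T.2 c : ℕ × ℕ).1 + (T.2 c : ℕ × ℕ).2),
    X (T.1 c)

/-- `q^{sp}` where `sp = v/2` is half the number of vertical dominoes, as an
element of the group algebra `ℤ[q^{ℚ}]`. -/
def qspin (v : ℕ) : AddMonoidAlgebra ℤ ℚ := AddMonoidAlgebra.single ((v : ℚ) / 2) 1

/-- The domino function `G_λ(X; q)`, with `q^{1/2}`-powers recorded in `ℤ[q^ℚ]`. -/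
def Gdom (M : ℕ) (μ : YoungDiagram) :
    MvPolynomial (Fin (M + 1)) (AddMonoidAlgebra ℤ ℚ) :=
  ∑ T ∈ Finset.univ.filter
      (fun T : (↥μ.cells → Fin (M + 1)) × (↥μ.cells → ↥μ.cells) => IsSSDT T),
    C (qspin (nvert T.2)) *
      ∏ c ∈ Finset.univ.filter (fun c : ↥μ.cells =>
          (c : ℕ × ℕ).1 + (c : ℕ × ℕ).2 < (T.2 c : ℕ × ℕ).1 + (T.2 c : ℕ × ℕ).2),
        X (T.1 c)

/-- The domino function `G_λ(X; 1)` at `q = 1`. -/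
def Gdom1 (M : ℕ) (μ : YoungDiagram) : MvPolynomial (Fin (M + 1)) ℤ :=
  ∑ T ∈ Finset.univ.filter
      (fun T : (↥μ.cells → Fin (M + 1)) × (↥μ.cells → ↥μ.cells) => IsSSDT T),
    dominoMonomial T

/-! ### 2-quotient -/

/-- The Young diagram with row lengths `ρ` (cut off at bounds `R, C`); the
definition forces lower-set-ness. -/
def diagramOf (ρ : ℕ → ℕ) (R C : ℕ) : YoungDiagram where
  cells := ((Finset.range R) ×ˢ (Finset.range C)).filter fun c => ∀ i ≤ c.1, c.2 < ρ i
  isLowerSet := by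
    intro a b hba ha
    simp only [Finset.coe_filter, Set.mem_setOf_eq, Finset.mem_product,
      Finset.mem_range] at *
    exact ⟨⟨lt_of_le_of_lt hba.1 ha.1.1, lt_of_le_of_lt hba.2 ha.1.2⟩,
      fun i hi => lt_of_le_of_lt hba.2 (ha.2 i (le_trans hi hba.1))⟩

/-- The pair of row-length functions of the 2-quotient of `μ` (a partition of `2n`),
computed via beta-numbers with `r = 2n + 2` beads: even beta-numbers give the first
component `λ⁻`, odd beta-numbers the second component `λ⁺`. -/
def quotientRows (μ : YoungDiagram) (n : ℕ) : (ℕ → ℕ) × (ℕ → ℕ) :=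
  let r := 2 * n + 2
  let bs := (List.range r).map fun i => μ.rowLen i + (r - 1 - i)
  let od := (bs.filter fun x => x % 2 = 1).insertionSort (· ≥ ·)
  let ev := (bs.filter fun x => x % 2 = 0).insertionSort (· ≥ ·)
  (fun j => ev.getD j 0 / 2 - (ev.length - 1 - j),
   fun j => (od.getD j 0 - 1) / 2 - (od.length - 1 - j))

/-- First component `λ⁻` of the 2-quotient of `μ ∈ P⁰(n)`. -/
def twoQuotMinus (μ : YoungDiagram) (n : ℕ) : YoungDiagram :=
  diagramOf (quotientRows μ n).1 (2 * n + 2) (4 * n + 4)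

/-- Second component `λ⁺` of the 2-quotient of `μ ∈ P⁰(n)`. -/
def twoQuotPlus (μ : YoungDiagram) (n : ℕ) : YoungDiagram :=
  diagramOf (quotientRows μ n).2 (2 * n + 2) (4 * n + 4)

/-- The Schur polynomial on the alphabet `X^* = {x_1, …, x_M}` (no `x_0`),
inside the ring of polynomials on `{x_0, …, x_M}`. -/
def schurStarPoly (M : ℕ) (μ : YoungDiagram) : MvPolynomial (Fin (M + 1)) ℤ :=
  ∑ f ∈ Finset.univ.filter
      (fun f : ↥μ.cells → Fin (M + 1) => IsSSYT f ∧ ∀ c, f c ≠ 0),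
    ∏ c, X (f c)

end

section ListHelpers

def slotMark : Option ℕ → ℕ | none => 0 | some _ => 1

lemma compOfSlots_nil : compOfSlots [] = [] := rfl
lemma compOfSlots_none (rest : List (Option ℕ)) :
    compOfSlots (none :: rest) = 0 :: compOfSlots rest := rfl
lemma compOfSlots_some_nil (r : ℕ) : compOfSlots [some r] = [1] := rfl
lemma compOfSlots_some_none (r : ℕ) (rest : List (Option ℕ)) :
    compOfSlots (some r :: none :: rest) = 1 :: compOfSlots (none :: rest) := rfl
lemma compOfSlots_some_some (r r' : ℕ) (rest : List (Option ℕ)) :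
    compOfSlots (some r :: some r' :: rest) =
      if r < r' then 1 :: compOfSlots (some r' :: rest)
      else match compOfSlots (some r' :: rest) with
        | [] => [1] | s :: t => (s + 1) :: t := rfl

lemma wcSlots_nil : wcSlots [] = [] := rfl

lemma wcSlots_cons (s : ℕ) (β : List ℕ) :
    wcSlots (s :: β) = (if s = 0 then [0] else List.replicate s 1) ++ wcSlots β := by
  simp [wcSlots]

lemma compOfSlots_spec (L : List (Option ℕ)) :
    wcSlots (compOfSlots L) = L.map slotMark ∧
    (∀ r rest, L = some r :: rest → ∃ s t, compOfSlots L = (s + 1) :: t) := by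
  induction L with
  | nil => exact ⟨rfl, by simp⟩
  | cons o rest ih =>
    rcases o with _ | r
    · refine ⟨?_, by simp⟩
      rw [compOfSlots_none, wcSlots_cons]
      simp [ih.1, slotMark]
    · rcases rest with _ | ⟨o', rest'⟩
      · refine ⟨?_, fun r₀ rest₀ hL => ⟨0, [], by rw [compOfSlots_some_nil]⟩⟩
        rw [compOfSlots_some_nil, wcSlots_cons]
        simp [slotMark, wcSlots_nil]
      rcases o' with _ | r'
      · constructor
        · rw [compOfSlots_some_none, wcSlots_cons]
          simp [ih.1, slotMark]
        · intro r₀ rest₀ hL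
          exact ⟨0, compOfSlots (none :: rest'), by rw [compOfSlots_some_none]⟩
      · by_cases hrr : r < r'
        · constructor
          · rw [compOfSlots_some_some, if_pos hrr, wcSlots_cons]
            simp [ih.1, slotMark]
          · intro r₀ rest₀ hL
            exact ⟨0, compOfSlots (some r' :: rest'),
              by rw [compOfSlots_some_some, if_pos hrr]⟩
        · obtain ⟨s, t, hst⟩ := ih.2 r' rest' rfl
          constructor
          · rw [compOfSlots_some_some, if_neg hrr, hst]
            have h1 : wcSlots ((s + 1 + 1) :: t) = 1 :: wcSlots ((s + 1) :: t) := by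
              rw [wcSlots_cons, wcSlots_cons]
              simp [List.replicate_succ]
            rw [h1, ← hst, ih.1]
            rfl
          · intro r₀ rest₀ hL
            exact ⟨s + 1, t, by rw [compOfSlots_some_some, if_neg hrr, hst]⟩

lemma wcDesAux_shift (α : List ℕ) : ∀ c, wcDesAux α c = (wcDesAux α 0).map (· + c) := by
  induction α with
  | nil => intro c; rfl
  | cons s rest ih =>
    intro c
    by_cases hs : s = 0
    · subst hs
      rw [wcDesAux, if_pos rfl, wcDesAux, if_pos rfl, ih (c + 1), ih 1, List.map_map]
      congr 1
      ext x
      simp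
      omega
    · rw [wcDesAux, if_neg hs, wcDesAux, if_neg hs, ih (c + s), ih (0 + s)]
      simp only [List.map_cons, List.map_map]
      congr 1
      · omega
      · congr 1
        ext x
        simp
        omega

def sD (L : List (Option ℕ)) (k : ℕ) : Prop :=
  1 ≤ k ∧ (∃ r, L.getD (k - 1) none = some r) ∧
    (L.getD k none = none ∨ ∃ r r', L.getD (k - 1) none = some r ∧ L.getD k none = some r' ∧ r < r')

lemma sD_cons (o : Option ℕ) (rest : List (Option ℕ)) (k : ℕ) :
    sD (o :: rest) k ↔
      (k = 1 ∧ (∃ r, o = some r) ∧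
        (rest.getD 0 none = none ∨ ∃ r r', o = some r ∧ rest.getD 0 none = some r' ∧ r < r'))
      ∨ ∃ k', k = k' + 1 ∧ sD rest k' := by
  match k with
  | 0 => simp [sD]
  | 1 =>
    simp only [sD]
    constructor
    · rintro ⟨-, h2, h3⟩
      refine Or.inl ⟨by trivial, by simpa using h2, ?_⟩
      simpa using h3
    · rintro (⟨-, h2, h3⟩ | ⟨k', hk', hk1, -⟩)
      · exact ⟨le_refl _, by simpa using h2, by simpa using h3⟩
      · omega
  | (k + 2) =>
    simp only [sD]
    constructor
    · rintro ⟨-, h2, h3⟩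
      exact Or.inr ⟨k + 1, rfl, by omega, by simpa using h2, by simpa using h3⟩
    · rintro (⟨h, -⟩ | ⟨k', hk', h1, h2, h3⟩)
      · omega
      · have : k' = k + 1 := by omega
        subst this
        exact ⟨by omega, by simpa using h2, by simpa using h3⟩

lemma wcDesAux_cons_pos (s : ℕ) (rest : List ℕ) (c : ℕ) (h : s ≠ 0) :
    wcDesAux (s :: rest) c = (c + s) :: wcDesAux rest (c + s) := by
  rw [wcDesAux, if_neg h]

lemma mem_wcDesAux_compOfSlots : ∀ (L : List (Option ℕ)) (k : ℕ),
    k ∈ wcDesAux (compOfSlots L) 0 ↔ sD L k := by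
  intro L
  induction L with
  | nil => intro k; simp [compOfSlots_nil, wcDesAux, sD]
  | cons o rest ih =>
    intro k
    rw [sD_cons]
    rcases o with _ | r
    · rw [compOfSlots_none, wcDesAux, if_pos rfl, wcDesAux_shift _ 1]
      simp only [List.mem_map]
      constructor
      · rintro ⟨y, hy, rfl⟩
        exact Or.inr ⟨y, rfl, (ih y).1 hy⟩
      · rintro (⟨-, ⟨r, hr⟩, -⟩ | ⟨k', rfl, hk'⟩)
        · simp at hr
        · exact ⟨k', (ih k').2 hk', rfl⟩
    · have hone : ∀ rest₂ : List (Option ℕ),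
          (k ∈ wcDesAux (1 :: compOfSlots rest₂) 0 ↔
            k = 1 ∨ ∃ k', k = k' + 1 ∧ k' ∈ wcDesAux (compOfSlots rest₂) 0) := by
        intro rest₂
        rw [wcDesAux_cons_pos _ _ _ one_ne_zero, wcDesAux_shift _ (0 + 1)]
        simp only [List.mem_cons, List.mem_map]
        constructor
        · rintro (h | ⟨y, hy, rfl⟩)
          · exact Or.inl (by omega)
          · exact Or.inr ⟨y, by omega, hy⟩
        · rintro (h | ⟨k', rfl, hk'⟩)
          · exact Or.inl (by omega)
          · exact Or.inr ⟨k', hk', by omega⟩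
      rcases rest with _ | ⟨o', rest'⟩
      · rw [compOfSlots_some_nil]
        rw [show ([1] : List ℕ) = 1 :: compOfSlots [] from rfl] 
        rw [hone []]
        simp only [compOfSlots_nil, wcDesAux, List.not_mem_nil]
        constructor
        · rintro (h | ⟨k', rfl, hf⟩)
          · exact Or.inl ⟨h, ⟨r, rfl⟩, Or.inl (by simp)⟩
          · exact hf.elim
        · rintro (⟨h, -⟩ | ⟨k', -, h⟩)
          · exact Or.inl h
          · exact absurd h (by simp [sD])
      rcases o' with _ | r'
      · rw [compOfSlots_some_none, hone (none :: rest')]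
        constructor
        · rintro (h | ⟨k', rfl, hk'⟩)
          · exact Or.inl ⟨h, ⟨r, rfl⟩, Or.inl (by simp)⟩
          · exact Or.inr ⟨k', rfl, (ih k').1 hk'⟩
        · rintro (⟨h, -⟩ | ⟨k', rfl, hk'⟩)
          · exact Or.inl h
          · exact Or.inr ⟨k', rfl, (ih k').2 hk'⟩
      · by_cases hrr : r < r'
        · rw [compOfSlots_some_some, if_pos hrr, hone (some r' :: rest')]
          constructor
          · rintro (h | ⟨k', rfl, hk'⟩)
            · exact Or.inl ⟨h, ⟨r, rfl⟩, Or.inr ⟨r, r', rfl, by simp, hrr⟩⟩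
            · exact Or.inr ⟨k', rfl, (ih k').1 hk'⟩
          · rintro (⟨h, -⟩ | ⟨k', rfl, hk'⟩)
            · exact Or.inl h
            · exact Or.inr ⟨k', rfl, (ih k').2 hk'⟩
        · obtain ⟨s, t, hst⟩ := (compOfSlots_spec (some r' :: rest')).2 r' rest' rfl
          rw [compOfSlots_some_some, if_neg hrr, hst]
          rw [wcDesAux_cons_pos _ _ _ (Nat.succ_ne_zero _), wcDesAux_shift _ (0 + (s + 1 + 1))]
          have hrest : ∀ k', sD (some r' :: rest') k' ↔
              (k' = s + 1 ∨ ∃ y ∈ wcDesAux t 0, y + (s + 1) = k') := by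
            intro k'
            rw [← ih k', hst, wcDesAux_cons_pos _ _ _ (Nat.succ_ne_zero _),
              wcDesAux_shift _ (0 + (s + 1))]
            simp only [List.mem_cons, List.mem_map]
            constructor
            · rintro (h | ⟨y, hy, rfl⟩)
              · exact Or.inl (by omega)
              · exact Or.inr ⟨y, hy, by omega⟩
            · rintro (h | ⟨y, hy, rfl⟩)
              · exact Or.inl (by omega)
              · exact Or.inr ⟨y, hy, by omega⟩
          simp only [List.mem_cons, List.mem_map]
          constructor
          · rintro (h | ⟨y, hy, rfl⟩)
            · exact Or.inr ⟨s + 1, by omega, (hrest _).2 (Or.inl rfl)⟩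
            · exact Or.inr ⟨y + (s + 1), by omega, (hrest _).2 (Or.inr ⟨y, hy, rfl⟩)⟩
          · rintro (⟨-, -, (hn | ⟨r₀, r₁, hr₀, hr₁, hlt⟩)⟩ | ⟨k', rfl, hk'⟩)
            · simp at hn
            · rw [Option.some_inj] at hr₀
              simp only [List.getD_cons_zero, Option.some_inj] at hr₁
              subst hr₀; subst hr₁
              exact absurd hlt hrr
            · rcases (hrest k').1 hk' with h | ⟨y, hy, rfl⟩
              · exact Or.inl (by omega)
              · exact Or.inr ⟨y, hy, by omega⟩

lemma mem_wcDes_compOfSlots (L : List (Option ℕ)) (k : ℕ) :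
    k ∈ wcDes (compOfSlots L) ↔ sD L k := by
  rw [wcDes, List.mem_toFinset]
  exact mem_wcDesAux_compOfSlots L k

end ListHelpers

/-- For a standard `(p)`-tableau `T₀ = (a, b)` of shape `((p), λ)`
with `λ ⊢ n`, the sum of `X^{T⁺}` over all semistandard `(p)`-tableaux with entries
in `[M]` standardizing to `T₀` equals `F̃_{comp(T₀)}(X)`. -/
theorem pTableau_standardization_class_sum (M p n : ℕ) (lam : YoungDiagram)
    (h : lam.card = n) (a : Fin p → Fin (n + p)) (b : ↥lam.cells → Fin (n + p))
    (hab : IsSBT a b) :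
    (∑ t ∈ (Finset.univ : Finset ((Fin p → Fin M) × (↥lam.cells → Fin M))).filter
        (fun t => (∀ i j : Fin p, i ≤ j → t.1 i ≤ t.1 j) ∧ IsSSYT t.2 ∧
          StdSBT t.1 t.2 a b),
      ∏ c, X (t.2 c)) = wcF M (compSBT a b) := by
  classical
  obtain ⟨haS', hbinj, hdisj, hrowb, hcolb⟩ := hab
  have haS : StrictMono a := fun i j hij => haS' i j hij
  have hcard : Fintype.card (Fin p ⊕ ↥lam.cells) = n + p := by
    simp only [Fintype.card_sum, Fintype.card_fin, Fintype.card_coe]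
    have hc : lam.cells.card = n := h
    omega
  have hinj : Function.Injective (Sum.elim a b) := by
    rintro (i | c) (j | d) hij
    · simp only [Sum.elim_inl] at hij
      rw [haS.injective hij]
    · exact absurd hij (hdisj i d)
    · exact absurd hij.symm (hdisj j c)
    · simp only [Sum.elim_inr] at hij
      rw [hbinj hij]
  have hbij : Function.Bijective (Sum.elim a b) := by
    rw [Fintype.bijective_iff_injective_and_card]
    exact ⟨hinj, by simp [hcard]⟩
  set E : (Fin p ⊕ ↥lam.cells) ≃ Fin (n + p) := Equiv.ofBijective _ hbij with hEdef
  have hEa : ∀ i : Fin p, E (Sum.inl i) = a i := fun i => rfl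
  have hEb : ∀ c : ↥lam.cells, E (Sum.inr c) = b c := fun c => rfl
  have hsymm_a : ∀ i : Fin p, E.symm (a i) = Sum.inl i := by
    intro i; rw [Equiv.symm_apply_eq]; rfl
  have hsymm_b : ∀ c : ↥lam.cells, E.symm (b c) = Sum.inr c := by
    intro c; rw [Equiv.symm_apply_eq]; rfl
  have hslen : (slotsSBT a b).length = n + p := by simp [slotsSBT]
  have hgetD : ∀ u : ℕ, u < n + p → (slotsSBT a b).getD u none =
      (if ∃ i : Fin p, (a i : ℕ) = u then none else some (rowOfLabel b u)) := by
    intro u hu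
    rw [List.getD_eq_getElem _ _ (by rw [hslen]; exact hu)]
    simp [slotsSBT]
  have hslot_out : ∀ u : ℕ, n + p ≤ u → (slotsSBT a b).getD u none = none := by
    intro u hu; exact List.getD_eq_default _ _ (by rw [hslen]; exact hu)
  have hrowOf : ∀ c : ↥lam.cells, rowOfLabel b ((b c : ℕ)) = (c : ℕ × ℕ).1 := by
    intro c
    have hfilter : (Finset.univ.filter fun d : ↥lam.cells => ((b d : ℕ) = (b c : ℕ))) = {c} := by
      ext d
      simp only [Finset.mem_filter, Finset.mem_univ, true_and, Finset.mem_singleton]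
      constructor
      · intro hd; exact hbinj (Fin.ext hd)
      · rintro rfl; rfl
    rw [rowOfLabel, hfilter, Finset.sum_singleton]
  have hslot_a : ∀ i : Fin p, (slotsSBT a b).getD ((a i : ℕ)) none = none := by
    intro i
    rw [hgetD _ (a i).isLt, if_pos ⟨i, rfl⟩]
  have hslot_b : ∀ c : ↥lam.cells,
      (slotsSBT a b).getD ((b c : ℕ)) none = some (c : ℕ × ℕ).1 := by
    intro c
    rw [hgetD _ (b c).isLt, if_neg, hrowOf]
    rintro ⟨i, hi⟩
    exact hdisj i c (Fin.ext hi)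
  have hsome_b : ∀ u r, (slotsSBT a b).getD u none = some r →
      ∃ c : ↥lam.cells, (b c : ℕ) = u ∧ (c : ℕ × ℕ).1 = r := by
    intro u r hu
    have hu' : u < n + p := by
      by_contra hcon
      rw [hslot_out u (by omega)] at hu
      exact absurd hu (by simp)
    obtain ⟨x, hx⟩ := hbij.2 ⟨u, hu'⟩
    rcases x with i | c
    · exfalso
      have hai : (a i : ℕ) = u := by
        rw [show a i = (⟨u, hu'⟩ : Fin (n + p)) from hx]
      have := hslot_a i
      rw [hai, hu] at this
      exact absurd this (by simp)
    · have hbc : (b c : ℕ) = u := by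
        rw [show b c = (⟨u, hu'⟩ : Fin (n + p)) from hx]
      refine ⟨c, hbc, ?_⟩
      have := hslot_b c
      rw [hbc, hu] at this
      exact (Option.some_inj.1 this).symm
  have hDmem : ∀ k, k ∈ wcDes (compSBT a b) ↔ sD (slotsSBT a b) k := fun k =>
    mem_wcDes_compOfSlots (slotsSBT a b) k
  have hDchar : ∀ u v : Fin (n + p), (u : ℕ) + 1 = (v : ℕ) →
      ((v : ℕ) ∈ wcDes (compSBT a b) ↔ ∃ r, (slotsSBT a b).getD (u : ℕ) none = some r ∧
        ((slotsSBT a b).getD (v : ℕ) none = none ∨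
          ∃ r', (slotsSBT a b).getD (v : ℕ) none = some r' ∧ r < r')) := by
    intro u v huv
    rw [hDmem, sD, show (v : ℕ) - 1 = (u : ℕ) from by omega]
    constructor
    · rintro ⟨-, ⟨r, hr⟩, (hn | ⟨r₀, r₁, hr₀, hr₁, hlt⟩)⟩
      · exact ⟨r, hr, Or.inl hn⟩
      · have heq : r₀ = r := by rw [hr] at hr₀; exact (Option.some_inj.1 hr₀).symm
        subst heq
        exact ⟨r₀, hr, Or.inr ⟨r₁, hr₁, hlt⟩⟩
    · rintro ⟨r, hr, hor⟩
      refine ⟨by omega, ⟨r, hr⟩, ?_⟩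
      rcases hor with hn | ⟨r', h1, h2⟩
      · exact Or.inl hn
      · exact Or.inr ⟨r, r', hr, h1, h2⟩
  have hW : wcSlots (compSBT a b) = (slotsSBT a b).map slotMark := (compOfSlots_spec _).1
  have hlen : (wcSlots (compSBT a b)).length = n + p := by
    rw [hW, List.length_map, hslen]
  have seq_mono : ∀ G : Fin (wcSlots (compSBT a b)).length → Fin M,
      seqOK (wcSlots (compSBT a b)).length M (wcDes (compSBT a b)) G →
      ∀ i j : Fin (wcSlots (compSBT a b)).length, (i : ℕ) ≤ (j : ℕ) → G i ≤ G j := by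
    intro G hG i j hij
    obtain ⟨d, hd⟩ : ∃ d, (i : ℕ) + d = (j : ℕ) := ⟨(j : ℕ) - (i : ℕ), by omega⟩
    clear hij
    induction d generalizing j with
    | zero => exact le_of_eq (congrArg G (Fin.ext (by omega)))
    | succ d ihd =>
      have hd' : (i : ℕ) + d < (wcSlots (compSBT a b)).length := by
        have := j.isLt; omega
      exact le_trans (ihd ⟨(i : ℕ) + d, hd'⟩ rfl)
        (hG ⟨(i : ℕ) + d, hd'⟩ j (show (i : ℕ) + d + 1 = (j : ℕ) from by omega)).1
  have seq_strict : ∀ G : Fin (wcSlots (compSBT a b)).length → Fin M,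
      seqOK (wcSlots (compSBT a b)).length M (wcDes (compSBT a b)) G →
      ∀ i j : Fin (wcSlots (compSBT a b)).length, (i : ℕ) ≤ (j : ℕ) →
      (∃ k, (i : ℕ) < k ∧ k ≤ (j : ℕ) ∧ k ∈ wcDes (compSBT a b)) → G i < G j := by
    rintro G hG i j hij ⟨k, hk1, hk2, hkD⟩
    have hk0 : 1 ≤ k := ((hDmem k).1 hkD).1
    have hkl : k < (wcSlots (compSBT a b)).length := lt_of_le_of_lt hk2 j.isLt
    have h1 : G i ≤ G ⟨k - 1, by omega⟩ :=
      seq_mono G hG i ⟨k - 1, by omega⟩ (show (i : ℕ) ≤ k - 1 from by omega)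
    have h2 : G ⟨k - 1, by omega⟩ < G ⟨k, hkl⟩ :=
      (hG ⟨k - 1, by omega⟩ ⟨k, hkl⟩ (show k - 1 + 1 = k from by omega)).2 hkD
    have h3 : G ⟨k, hkl⟩ ≤ G j := seq_mono G hG ⟨k, hkl⟩ j (show k ≤ (j : ℕ) from hk2)
    exact lt_of_le_of_lt h1 (lt_of_lt_of_le h2 h3)
  have chain : ∀ (d u : ℕ) (c : ↥lam.cells), (b c : ℕ) = u →
      (∀ k, u < k → k ≤ u + d → k ∉ wcDes (compSBT a b)) →
      ∃ e : ↥lam.cells, (b e : ℕ) = u + d ∧ (e : ℕ × ℕ).1 ≤ (c : ℕ × ℕ).1 := by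
    intro d
    induction d with
    | zero => exact fun u c hc _ => ⟨c, by omega, le_refl _⟩
    | succ d ihd =>
      intro u c hc hnd
      obtain ⟨e, he, her⟩ := ihd u c hc (fun k h1 h2 => hnd k h1 (by omega))
      have h1 : (slotsSBT a b).getD (u + d) none = some (e : ℕ × ℕ).1 := by
        rw [← he]; exact hslot_b e
      rcases hcase : (slotsSBT a b).getD (u + d + 1) none with _ | r'
      · exact absurd ((hDmem _).2 ⟨by omega, ⟨_, by simpa using h1⟩, Or.inl hcase⟩)
          (hnd _ (by omega) (by omega))
      · have hr'le : r' ≤ (e : ℕ × ℕ).1 := by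
          by_contra hlt
          push_neg at hlt
          exact absurd ((hDmem _).2 ⟨by omega, ⟨_, by simpa using h1⟩,
            Or.inr ⟨_, r', by simpa using h1, hcase, hlt⟩⟩) (hnd _ (by omega) (by omega))
        obtain ⟨e', he', hre'⟩ := hsome_b _ _ hcase
        exact ⟨e', by omega, by omega⟩
  rw [wcF]
  refine Finset.sum_nbij'
    (fun t : (Fin p → Fin M) × (↥lam.cells → Fin M) =>
      (fun i => Sum.elim t.1 t.2 (E.symm (Fin.cast hlen i)) :
        Fin (wcSlots (compSBT a b)).length → Fin M))
    (fun G => (fun i => G (Fin.cast hlen.symm (a i)), fun c => G (Fin.cast hlen.symm (b c))))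
    ?_ ?_ ?_ ?_ ?_
  · -- forward map lands in seqOK
    intro t ht
    simp only [Finset.mem_filter, Finset.mem_univ, true_and] at ht ⊢
    obtain ⟨hmono, hssyt, s1, s2, s3, s4⟩ := ht
    intro i j hij
    have hvalij : ((Fin.cast hlen i : Fin (n + p)) : ℕ) + 1 =
        ((Fin.cast hlen j : Fin (n + p)) : ℕ) := by simpa using hij
    set u : Fin (n + p) := Fin.cast hlen i with hu
    set v : Fin (n + p) := Fin.cast hlen j with hv
    have huv : (u : ℕ) < (v : ℕ) := by omega
    rcases hx : E.symm u with i₀ | c <;> rcases hy : E.symm v with j₀ | d <;>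
      simp only [← hu, ← hv, hx, hy, Sum.elim_inl, Sum.elim_inr]
    · have hau : a i₀ = u := by rw [← hEa i₀, ← hx, Equiv.apply_symm_apply]
      have hav : a j₀ = v := by rw [← hEa j₀, ← hy, Equiv.apply_symm_apply]
      constructor
      · apply hmono
        refine le_of_lt (haS.lt_iff_lt.1 ?_)
        rw [hau, hav]
        exact Fin.lt_def.2 huv
      · intro hmem
        obtain ⟨r, hr, -⟩ := (hDchar u v hvalij).1 hmem
        rw [← hau, hslot_a] at hr
        exact absurd hr (by simp)
    · have hau : a i₀ = u := by rw [← hEa i₀, ← hx, Equiv.apply_symm_apply]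
      have hbv : b d = v := by rw [← hEb d, ← hy, Equiv.apply_symm_apply]
      constructor
      · exact (s3 i₀ d).1 (by rw [hau, hbv]; exact Fin.lt_def.2 huv)
      · intro hmem
        obtain ⟨r, hr, -⟩ := (hDchar u v hvalij).1 hmem
        rw [← hau, hslot_a] at hr
        exact absurd hr (by simp)
    · have hbu : b c = u := by rw [← hEb c, ← hx, Equiv.apply_symm_apply]
      have hav : a j₀ = v := by rw [← hEa j₀, ← hy, Equiv.apply_symm_apply]
      have hlt : t.2 c < t.1 j₀ := (s4 c j₀).1 (by rw [hbu, hav]; exact Fin.lt_def.2 huv)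
      exact ⟨le_of_lt hlt, fun _ => hlt⟩
    · have hbu : b c = u := by rw [← hEb c, ← hx, Equiv.apply_symm_apply]
      have hbv : b d = v := by rw [← hEb d, ← hy, Equiv.apply_symm_apply]
      have hlt : b c < b d := by rw [hbu, hbv]; exact Fin.lt_def.2 huv
      have hcd := (s2 c d).1 hlt
      constructor
      · rcases hcd with h1 | ⟨h1, -⟩
        · exact le_of_lt h1
        · exact le_of_eq h1
      · intro hmem
        obtain ⟨r, hr, hcase⟩ := (hDchar u v hvalij).1 hmem
        rw [← hbu, hslot_b] at hr
        have hrc : r = (c : ℕ × ℕ).1 := (Option.some_inj.1 hr).symm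
        rcases hcase with hn | ⟨r', hr', hrr'⟩
        · rw [← hbv, hslot_b] at hn
          exact absurd hn (by simp)
        · rw [← hbv, hslot_b] at hr'
          have hrd : r' = (d : ℕ × ℕ).1 := (Option.some_inj.1 hr').symm
          have hrow : (c : ℕ × ℕ).1 < (d : ℕ × ℕ).1 := by omega
          rcases hcd with h1 | ⟨hfe, hcol⟩
          · exact h1
          · exfalso
            have hxmem : ((c : ℕ × ℕ).1, (d : ℕ × ℕ).2) ∈ lam.cells := by
              rw [YoungDiagram.mem_cells]
              exact lam.up_left_mem (le_of_lt hrow) (le_refl _)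
                (by rw [← YoungDiagram.mem_cells]; exact d.2)
            have hA : t.2 c ≤ t.2 ⟨_, hxmem⟩ := hssyt.1 c ⟨_, hxmem⟩ rfl (le_of_lt hcol)
            have hB : t.2 ⟨_, hxmem⟩ < t.2 d := hssyt.2 ⟨_, hxmem⟩ d rfl hrow
            rw [hfe] at hA
            exact absurd (lt_of_le_of_lt hA hB) (lt_irrefl _)
  · -- backward map lands in tableau conditions
    intro G hGmem
    simp only [Finset.mem_filter, Finset.mem_univ, true_and] at hGmem ⊢
    have hG : seqOK (wcSlots (compSBT a b)).length M (wcDes (compSBT a b)) G := hGmem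
    have hGle : ∀ x y : Fin (n + p), (x : ℕ) ≤ (y : ℕ) →
        G (Fin.cast hlen.symm x) ≤ G (Fin.cast hlen.symm y) := by
      intro x y hxy
      exact seq_mono G hG _ _ (by simpa using hxy)
    have hGlt : ∀ x y : Fin (n + p), (x : ℕ) ≤ (y : ℕ) →
        (∃ k, (x : ℕ) < k ∧ k ≤ (y : ℕ) ∧ k ∈ wcDes (compSBT a b)) →
        G (Fin.cast hlen.symm x) < G (Fin.cast hlen.symm y) := by
      intro x y hxy hex
      exact seq_strict G hG _ _ (by simpa using hxy) (by simpa using hex)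
    have hdesc_bb : ∀ c d : ↥lam.cells, (c : ℕ × ℕ).1 < (d : ℕ × ℕ).1 → b c < b d →
        G (Fin.cast hlen.symm (b c)) < G (Fin.cast hlen.symm (b d)) := by
      intro c d hrow hbcd
      apply hGlt _ _ (le_of_lt hbcd)
      by_contra hnone
      push_neg at hnone
      obtain ⟨e, he, her⟩ := chain ((b d : ℕ) - (b c : ℕ)) (b c : ℕ) c rfl
        (fun k h1 h2 => hnone k h1 (by omega))
      have hed : e = d := hbinj (Fin.ext (by omega))
      rw [hed] at her
      omega
    have hdesc_ba : ∀ (c : ↥lam.cells) (i : Fin p), b c < a i →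
        G (Fin.cast hlen.symm (b c)) < G (Fin.cast hlen.symm (a i)) := by
      intro c i hlt
      apply hGlt _ _ (le_of_lt hlt)
      by_contra hnone
      push_neg at hnone
      obtain ⟨e, he, -⟩ := chain ((a i : ℕ) - (b c : ℕ)) (b c : ℕ) c rfl
        (fun k h1 h2 => hnone k h1 (by omega))
      exact hdisj i e ((Fin.ext (by omega) : b e = a i).symm)
    have hmono_g : ∀ i j : Fin p, i ≤ j → G (Fin.cast hlen.symm (a i)) ≤
        G (Fin.cast hlen.symm (a j)) := by
      intro i j hij
      exact hGle _ _ (Fin.le_def.1 (haS.monotone hij))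
    have hssyt_f : IsSSYT (fun c : ↥lam.cells => G (Fin.cast hlen.symm (b c))) := by
      constructor
      · intro c d hr hc
        rcases eq_or_lt_of_le hc with hceq | hclt
        · have : c = d := Subtype.ext (Prod.ext hr hceq)
          rw [this]
        · exact hGle _ _ (Fin.le_def.1 (le_of_lt (hrowb c d hr hclt)))
      · intro c d hcc hrlt
        exact hdesc_bb c d hrlt (hcolb c d hcc hrlt)
    have chain2 : ∀ (d : ℕ) (u : ℕ) (c : ↥lam.cells), (b c : ℕ) = u →
        (∀ k, u < k → k ≤ u + d → k ∉ wcDes (compSBT a b)) →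
        (∀ e : ↥lam.cells, u ≤ (b e : ℕ) → (b e : ℕ) ≤ u + d →
          G (Fin.cast hlen.symm (b e)) = G (Fin.cast hlen.symm (b c))) →
        ∃ e : ↥lam.cells, (b e : ℕ) = u + d ∧ (e : ℕ × ℕ).1 ≤ (c : ℕ × ℕ).1 ∧
          (0 < d → (c : ℕ × ℕ).2 < (e : ℕ × ℕ).2) := by
      intro d
      induction d with
      | zero => exact fun u c hc _ _ => ⟨c, by omega, le_refl _, fun hd => absurd hd (by omega)⟩
      | succ d ihd =>
        intro u c hc hnd heqv
        obtain ⟨e, he, her, hec⟩ := ihd u c hc (fun k h1 h2 => hnd k h1 (by omega))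
          (fun e h1 h2 => heqv e h1 (by omega))
        have h1 : (slotsSBT a b).getD (u + d) none = some (e : ℕ × ℕ).1 := by
          rw [← he]; exact hslot_b e
        rcases hcase : (slotsSBT a b).getD (u + d + 1) none with _ | r'
        · exact absurd ((hDmem _).2 ⟨by omega, ⟨_, by simpa using h1⟩, Or.inl hcase⟩)
            (hnd _ (by omega) (by omega))
        · have hr'le : r' ≤ (e : ℕ × ℕ).1 := by
            by_contra hlt
            push_neg at hlt
            exact absurd ((hDmem _).2 ⟨by omega, ⟨_, by simpa using h1⟩,
              Or.inr ⟨_, r', by simpa using h1, hcase, hlt⟩⟩) (hnd _ (by omega) (by omega))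
          obtain ⟨e', he', hre'⟩ := hsome_b _ _ hcase
          have hbee' : b e < b e' := Fin.lt_def.2 (by omega)
          have hrowle : (e' : ℕ × ℕ).1 ≤ (e : ℕ × ℕ).1 := by omega
          have hcol : (e : ℕ × ℕ).2 < (e' : ℕ × ℕ).2 := by
            rcases eq_or_lt_of_le hrowle with hre | hre
            · rcases lt_trichotomy ((e : ℕ × ℕ).2) ((e' : ℕ × ℕ).2) with h2 | h2 | h2
              · exact h2
              · exfalso
                have hee : e = e' := Subtype.ext (Prod.ext hre.symm h2)
                rw [hee] at hbee'
                exact absurd hbee' (lt_irrefl _)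
              · exact absurd (hrowb e' e hre h2) (not_lt.2 (le_of_lt hbee'))
            · by_contra hcc
              push_neg at hcc
              have hfe : G (Fin.cast hlen.symm (b e)) = G (Fin.cast hlen.symm (b c)) :=
                heqv e (by omega) (by omega)
              have hfe' : G (Fin.cast hlen.symm (b e')) = G (Fin.cast hlen.symm (b c)) :=
                heqv e' (by omega) (by omega)
              have hxmem : ((e' : ℕ × ℕ).1, (e : ℕ × ℕ).2) ∈ lam.cells := by
                rw [YoungDiagram.mem_cells]
                exact lam.up_left_mem (le_of_lt hre) (le_refl _)
                  (by rw [← YoungDiagram.mem_cells]; exact e.2)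
              have hA := hssyt_f.1 e' ⟨_, hxmem⟩ rfl hcc
              have hB := hssyt_f.2 ⟨_, hxmem⟩ e rfl hre
              have hAB := lt_of_le_of_lt hA hB
              simp only [] at hAB
              rw [hfe, hfe'] at hAB
              exact absurd hAB (lt_irrefl _)
          refine ⟨e', by omega, by omega, fun _ => ?_⟩
          rcases Nat.eq_zero_or_pos d with hd0 | hd0
          · have hec' : e = c := hbinj (Fin.ext (by omega))
            have he2 : (e : ℕ × ℕ).2 = (c : ℕ × ℕ).2 := by rw [hec']
            omega
          · have := hec hd0
            omega
    have s2fwd : ∀ c d : ↥lam.cells, b c < b d →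
        G (Fin.cast hlen.symm (b c)) < G (Fin.cast hlen.symm (b d)) ∨
        (G (Fin.cast hlen.symm (b c)) = G (Fin.cast hlen.symm (b d)) ∧
          (c : ℕ × ℕ).2 < (d : ℕ × ℕ).2) := by
      intro c d hbcd
      rcases eq_or_lt_of_le (hGle _ _ (Fin.le_def.1 (le_of_lt hbcd))) with heq | hlt
      · refine Or.inr ⟨heq, ?_⟩
        have hnd : ∀ k, (b c : ℕ) < k → k ≤ (b d : ℕ) → k ∉ wcDes (compSBT a b) := by
          intro k h1 h2 hk
          exact absurd (hGlt (b c) (b d) (Fin.le_def.1 (le_of_lt hbcd)) ⟨k, h1, h2, hk⟩)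
            (by rw [heq]; exact lt_irrefl _)
        have heqv : ∀ e : ↥lam.cells, (b c : ℕ) ≤ (b e : ℕ) →
            (b e : ℕ) ≤ (b c : ℕ) + ((b d : ℕ) - (b c : ℕ)) →
            G (Fin.cast hlen.symm (b e)) = G (Fin.cast hlen.symm (b c)) := by
          intro e h1 h2
          have hA := hGle (b c) (b e) h1
          have hB := hGle (b e) (b d) (by omega)
          rw [← heq] at hB
          exact le_antisymm hB hA
        obtain ⟨e, he, -, hcol⟩ := chain2 ((b d : ℕ) - (b c : ℕ)) (b c : ℕ) c rfl
          (fun k h1 h2 => hnd k h1 (by omega)) heqv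
        have hed : e = d := hbinj (Fin.ext (by omega))
        have hlt0 : 0 < (b d : ℕ) - (b c : ℕ) := by
          have := Fin.lt_def.1 hbcd; omega
        have hcc := hcol hlt0
        rw [hed] at hcc
        exact hcc
      · exact Or.inl hlt
    refine ⟨hmono_g, hssyt_f, ?_, ?_, ?_, ?_⟩
    · intro i j
      constructor
      · intro hij
        have hij' : i < j := haS.lt_iff_lt.1 hij
        rcases eq_or_lt_of_le (hmono_g i j (le_of_lt hij')) with heq | hlt
        · exact Or.inr ⟨heq, hij'⟩
        · exact Or.inl hlt
      · rintro (hlt | ⟨heq, hij⟩)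
        · by_contra hcon
          push_neg at hcon
          have hji : j ≤ i := haS.le_iff_le.1 hcon
          exact absurd hlt (not_lt.2 (hmono_g j i hji))
        · exact haS hij
    · intro c d
      constructor
      · exact s2fwd c d
      · rintro (hlt | ⟨heq, hcol⟩)
        · rcases lt_trichotomy (b c) (b d) with h1 | h1 | h1
          · exact h1
          · rw [hbinj h1] at hlt; exact absurd hlt (lt_irrefl _)
          · exact absurd (hGle _ _ (Fin.le_def.1 (le_of_lt h1))) (not_le.2 hlt)
        · rcases lt_trichotomy (b c) (b d) with h1 | h1 | h1
          · exact h1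
          · rw [hbinj h1] at hcol; exact absurd hcol (lt_irrefl _)
          · rcases s2fwd d c h1 with h2 | ⟨h2, h3⟩
            · simp only [] at heq
              rw [heq] at h2; exact absurd h2 (lt_irrefl _)
            · omega
    · intro i c
      constructor
      · intro hlt
        exact hGle _ _ (Fin.le_def.1 (le_of_lt hlt))
      · intro hle
        rcases lt_trichotomy (a i) (b c) with h1 | h1 | h1
        · exact h1
        · exact absurd h1 (hdisj i c)
        · exact absurd (hdesc_ba c i h1) (not_lt.2 hle)
    · intro c i
      constructor
      · exact fun h1 => hdesc_ba c i h1
      · intro hlt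
        rcases lt_trichotomy (b c) (a i) with h1 | h1 | h1
        · exact h1
        · exact absurd h1.symm (hdisj i c)
        · exact absurd (hGle _ _ (Fin.le_def.1 (le_of_lt h1))) (not_le.2 hlt)
  · -- left inverse
    intro t ht
    refine Prod.ext ?_ ?_
    · funext i
      show Sum.elim t.1 t.2 (E.symm (Fin.cast hlen (Fin.cast hlen.symm (a i)))) = t.1 i
      rw [show Fin.cast hlen (Fin.cast hlen.symm (a i)) = a i from Fin.ext (by simp), hsymm_a]
      rfl
    · funext c
      show Sum.elim t.1 t.2 (E.symm (Fin.cast hlen (Fin.cast hlen.symm (b c)))) = t.2 c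
      rw [show Fin.cast hlen (Fin.cast hlen.symm (b c)) = b c from Fin.ext (by simp), hsymm_b]
      rfl
  · -- right inverse
    intro G hGmem
    funext i
    show Sum.elim _ _ (E.symm (Fin.cast hlen i)) = G i
    rcases hx : E.symm (Fin.cast hlen i) with i₀ | c
    · have hav : a i₀ = Fin.cast hlen i := by rw [← hEa i₀, ← hx, Equiv.apply_symm_apply]
      simp only [Sum.elim_inl]
      exact congrArg G (Fin.ext (by rw [Fin.coe_cast, hav, Fin.coe_cast]))
    · have hbv : b c = Fin.cast hlen i := by rw [← hEb c, ← hx, Equiv.apply_symm_apply]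
      simp only [Sum.elim_inr]
      exact congrArg G (Fin.ext (by rw [Fin.coe_cast, hbv, Fin.coe_cast]))
  · -- monomial equality
    intro t ht
    have hexp : ∀ i : Fin (wcSlots (compSBT a b)).length,
        (wcSlots (compSBT a b)).get i = slotMark ((slotsSBT a b).getD (i : ℕ) none) := by
      have key : ∀ k : ℕ, k < (slotsSBT a b).length →
          (wcSlots (compSBT a b)).getD k 0 = slotMark ((slotsSBT a b).getD k none) := by
        intro k hk
        rw [hW, List.getD_eq_getElem _ _ (by simpa using hk), List.getElem_map,
          List.getD_eq_getElem _ _ hk]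
      intro i
      have hi : (i : ℕ) < (slotsSBT a b).length := by rw [hslen, ← hlen]; exact i.isLt
      rw [List.get_eq_getElem,
        show (wcSlots (compSBT a b))[(i : ℕ)] = (wcSlots (compSBT a b)).getD (i : ℕ) 0 from
          (List.getD_eq_getElem _ _ i.isLt).symm]
      exact key (i : ℕ) hi
    calc ∏ c, (X (t.2 c) : MvPolynomial (Fin M) ℤ)
        = ∏ x : Fin p ⊕ ↥lam.cells, (X (Sum.elim t.1 t.2 x) : MvPolynomial (Fin M) ℤ) ^
            slotMark ((slotsSBT a b).getD ((E x : Fin (n + p)) : ℕ) none) := by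
          rw [Fintype.prod_sum_type]
          have h1 : ∀ i : Fin p, (X (Sum.elim t.1 t.2 (Sum.inl i)) : MvPolynomial (Fin M) ℤ) ^
              slotMark ((slotsSBT a b).getD ((E (Sum.inl i) : Fin (n + p)) : ℕ) none) = 1 := by
            intro i
            rw [hEa, hslot_a]
            rfl
          have h2 : ∀ c : ↥lam.cells,
              (X (Sum.elim t.1 t.2 (Sum.inr c)) : MvPolynomial (Fin M) ℤ) ^
              slotMark ((slotsSBT a b).getD ((E (Sum.inr c) : Fin (n + p)) : ℕ) none) =
              X (t.2 c) := by
            intro c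
            rw [hEb, hslot_b]
            simp [slotMark]
          rw [Finset.prod_congr rfl (fun i _ => h1 i), Finset.prod_congr rfl (fun c _ => h2 c)]
          simp
      _ = ∏ u : Fin (n + p), (X (Sum.elim t.1 t.2 (E.symm u)) : MvPolynomial (Fin M) ℤ) ^
            slotMark ((slotsSBT a b).getD ((u : Fin (n + p)) : ℕ) none) := by
          rw [← Equiv.prod_comp E (fun u => (X (Sum.elim t.1 t.2 (E.symm u)) :
            MvPolynomial (Fin M) ℤ) ^ slotMark ((slotsSBT a b).getD ((u : Fin (n + p)) : ℕ) none))]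
          refine Finset.prod_congr rfl (fun x _ => ?_)
          rw [Equiv.symm_apply_apply]
      _ = ∏ i : Fin (wcSlots (compSBT a b)).length,
            (X (Sum.elim t.1 t.2 (E.symm (Fin.cast hlen i))) : MvPolynomial (Fin M) ℤ) ^
            slotMark ((slotsSBT a b).getD ((Fin.cast hlen i : Fin (n + p)) : ℕ) none) := by
          exact (Equiv.prod_comp (finCongr hlen) _).symm
      _ = ∏ i : Fin (wcSlots (compSBT a b)).length,
            (X (Sum.elim t.1 t.2 (E.symm (Fin.cast hlen i))) : MvPolynomial (Fin M) ℤ) ^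
            (wcSlots (compSBT a b)).get i := by
          refine Finset.prod_congr rfl (fun i _ => ?_)
          rw [hexp i, Fin.coe_cast]
end

section
/- For signed permutations α ∈ B_n and β ∈ B_m, the product of Chow's type B fundamental quasisymmetric functions satisfies F^B_{Des(α)}(X) * F^B_{Des(β)}(X) = Σ_{γ ∈ α ⧢ β} F^B_{Des(γ)}(X), where α ⧢ β is the set of signed shuffles. -/
open MvPolynomial Finset Equiv

attribute [local instance] Classical.propDecidable

/-! ### Auxiliary lemmas for the shuffle theorem -/

noncomputable section ShuffleAux

/-! #### Basic facts about `sval` -/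

lemma sval_ne_zero {N : ℕ} (π : SPerm N) (i : Fin N) : sval π i ≠ 0 := by
  unfold sval; split <;> omega

lemma sval_natAbs {N : ℕ} (π : SPerm N) (i : Fin N) :
    (sval π i).natAbs = (π.1 i : ℕ) + 1 := by
  unfold sval; split <;> omega

lemma sval_neg_iff {N : ℕ} (π : SPerm N) (i : Fin N) : sval π i < 0 ↔ π.2 i = true := by
  unfold sval; rcases hb : π.2 i <;> simp [hb] <;> omega

lemma sval_pos_iff {N : ℕ} (π : SPerm N) (i : Fin N) : 0 < sval π i ↔ π.2 i = false := by
  unfold sval; rcases hb : π.2 i <;> simp [hb] <;> omega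

lemma sval_le {N : ℕ} (π : SPerm N) (i : Fin N) : sval π i ≤ (N : ℤ) := by
  have := (π.1 i).isLt; unfold sval; split <;> omega

lemma neg_le_sval {N : ℕ} (π : SPerm N) (i : Fin N) : -(N : ℤ) ≤ sval π i := by
  have := (π.1 i).isLt; unfold sval; split <;> omega

/-! #### The shift `x ↦ x ± n` -/

lemma bshift_lt_iff {x y : ℤ} {n : ℕ} (hx : x ≠ 0) (hy : y ≠ 0) :
    x + (if 0 < x then (n : ℤ) else -(n : ℤ)) < y + (if 0 < y then (n : ℤ) else -(n : ℤ)) ↔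
      x < y := by
  split_ifs <;> omega

lemma bshift_neg_iff {x : ℤ} {n : ℕ} (hx : x ≠ 0) :
    x + (if 0 < x then (n : ℤ) else -(n : ℤ)) < 0 ↔ x < 0 := by
  split_ifs <;> omega

lemma bshift_natAbs {x : ℤ} {n : ℕ} (hx : x ≠ 0) :
    (x + (if 0 < x then (n : ℤ) else -(n : ℤ))).natAbs = x.natAbs + n := by
  split_ifs <;> omega

/-! #### Descent set membership -/

lemma mem_desB_succ {N : ℕ} {π : SPerm N} {i j : Fin N} (hij : (i : ℕ) + 1 = (j : ℕ)) :
    (j : ℕ) ∈ desB π ↔ sval π j < sval π i := by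
  unfold desB
  rw [Finset.mem_filter]
  constructor
  · rintro ⟨-, h | ⟨i', j', h1, h2, h3⟩⟩
    · exact absurd h.1 (by omega)
    · have hj' : j' = j := Fin.ext h2
      have hi' : i' = i := Fin.ext (by omega)
      subst hj'; subst hi'; exact h3
  · intro h
    exact ⟨Finset.mem_range.2 j.isLt, Or.inr ⟨i, j, hij, rfl, h⟩⟩

lemma mem_desB_zero {N : ℕ} {π : SPerm N} {j : Fin N} (hj : (j : ℕ) = 0) :
    (0 : ℕ) ∈ desB π ↔ sval π j < 0 := by
  unfold desB
  rw [Finset.mem_filter]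
  constructor
  · rintro ⟨-, ⟨-, j', hj', h⟩ | ⟨i', j', h1, h2, h3⟩⟩
    · have : j' = j := Fin.ext (by omega)
      subst this; exact h
    · omega
  · intro h
    exact ⟨Finset.mem_range.2 (by have := j.isLt; omega), Or.inl ⟨rfl, j, hj, h⟩⟩

/-! #### Structural lemmas for `seqOKB` sequences -/

lemma seqOKB_mono {n M : ℕ} {I : Finset ℕ} {k : Fin n → Fin (M + 1)} (hk : seqOKB n I k) :
    ∀ {s t : Fin n}, s ≤ t → k s ≤ k t := by
  have key : ∀ (d : ℕ) (s t : Fin n), (s : ℕ) + d = (t : ℕ) → k s ≤ k t := by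
    intro d
    induction d with
    | zero =>
      intro s t h
      have : s = t := Fin.ext (by omega)
      subst this; exact le_rfl
    | succ d ih =>
      intro s t h
      have ht : (s : ℕ) + d < n := by have := t.isLt; omega
      exact le_trans (ih s ⟨(s : ℕ) + d, ht⟩ rfl) ((hk.1 ⟨(s : ℕ) + d, ht⟩ t (by simp; omega)).1)
  intro s t h
  exact key ((t : ℕ) - (s : ℕ)) s t (by rw [Fin.le_def] at h; omega)

lemma seqOKB_strict {n M : ℕ} {π : SPerm n} {k : Fin n → Fin (M + 1)}
    (hk : seqOKB n (desB π) k) :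
    ∀ {s t : Fin n}, s < t → sval π t < sval π s → k s < k t := by
  have key : ∀ (d : ℕ) (s t : Fin n), (s : ℕ) + 1 + d = (t : ℕ) →
      sval π t < sval π s → k s < k t := by
    intro d
    induction d with
    | zero =>
      intro s t h hsv
      exact (hk.1 s t (by omega)).2 ((mem_desB_succ (by omega)).2 hsv)
    | succ d ih =>
      intro s t h hsv
      have ht' : (s : ℕ) + 1 + d < n := by have := t.isLt; omega
      set t' : Fin n := ⟨(s : ℕ) + 1 + d, ht'⟩ with ht'def
      by_cases hc : sval π t < sval π t'
      · refine lt_of_le_of_lt (seqOKB_mono hk (show s ≤ t' by rw [Fin.le_def]; simp [ht'def]; omega))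
          ((hk.1 t' t (by simp [ht'def]; omega)).2 ((mem_desB_succ (by simp [ht'def]; omega)).2 hc))
      · exact lt_of_lt_of_le (ih s t' rfl (lt_of_le_of_lt (not_lt.1 hc) hsv))
          (seqOKB_mono hk (le_of_lt (show t' < t by rw [Fin.lt_def]; simp [ht'def]; omega)))
  intro s t h hsv
  exact key ((t : ℕ) - (s : ℕ) - 1) s t (by rw [Fin.lt_def] at h; omega) hsv

lemma seqOKB_pos {n M : ℕ} {π : SPerm n} {k : Fin n → Fin (M + 1)}
    (hk : seqOKB n (desB π) k) :
    ∀ (t : Fin n), sval π t < 0 → 0 < k t := by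
  have key : ∀ (d : ℕ) (t : Fin n), (t : ℕ) = d → sval π t < 0 → 0 < k t := by
    intro d
    induction d with
    | zero =>
      intro t ht hsv
      exact hk.2 t ht ((mem_desB_zero ht).2 hsv)
    | succ d ih =>
      intro t ht hsv
      have ht' : d < n := by have := t.isLt; omega
      set t' : Fin n := ⟨d, ht'⟩ with ht'def
      by_cases hc : sval π t < sval π t'
      · exact lt_of_le_of_lt (Fin.zero_le _)
          ((hk.1 t' t (by simp [ht'def]; omega)).2 ((mem_desB_succ (by simp [ht'def]; omega)).2 hc))
      · exact lt_of_lt_of_le (ih t' rfl (lt_of_le_of_lt (not_lt.1 hc) hsv))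
          (seqOKB_mono hk (show t' ≤ t by rw [Fin.le_def]; simp [ht'def]; omega))
  intro t; exact key (t : ℕ) t rfl

/-- Pulling back a `seqOKB` sequence along a strictly monotone map that is
order-compatible on signed values. -/
lemma seqOKB_pullback {N n' M : ℕ} {γ : SPerm N} {π : SPerm n'} {k : Fin N → Fin (M + 1)}
    {φ : Fin n' → Fin N}
    (hφ : ∀ a b : Fin n', a < b → φ a < φ b)
    (hord : ∀ a b : Fin n', sval π b < sval π a → sval γ (φ b) < sval γ (φ a))
    (hneg : ∀ a : Fin n', sval π a < 0 → sval γ (φ a) < 0)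
    (hk : seqOKB N (desB γ) k) : seqOKB n' (desB π) (fun i => k (φ i)) := by
  constructor
  · intro i j hij
    have hij' : i < j := by rw [Fin.lt_def]; omega
    refine ⟨seqOKB_mono hk (le_of_lt (hφ _ _ hij')), fun hd => ?_⟩
    exact seqOKB_strict hk (hφ _ _ hij') (hord _ _ ((mem_desB_succ hij).1 hd))
  · intro j hj hd
    exact seqOKB_pos hk _ (hneg j ((mem_desB_zero hj).1 hd))

/-! #### Lexicographic arithmetic -/

lemma lex_nat_lt {a b r s K : ℕ} (hr : r < K) (hs : s < K) :
    a * K + r < b * K + s ↔ a < b ∨ (a = b ∧ r < s) := by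
  constructor
  · intro h
    rcases lt_trichotomy a b with h' | h' | h'
    · exact Or.inl h'
    · subst h'; exact Or.inr ⟨rfl, by omega⟩
    · exfalso
      have h1 : (b + 1) * K ≤ a * K := Nat.mul_le_mul_right K (by omega)
      have h2 : (b + 1) * K = b * K + K := by ring
      omega
  · rintro (h | ⟨rfl, h⟩)
    · have h1 : (a + 1) * K ≤ b * K := Nat.mul_le_mul_right K (by omega)
      have h2 : (a + 1) * K = a * K + K := by ring
      omega
    · omega

lemma lex_nat_eq {a b r s K : ℕ} (hr : r < K) (hs : s < K) (h : a * K + r = b * K + s) :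
    a = b ∧ r = s := by
  rcases lt_trichotomy a b with h' | h' | h'
  · have h1 : (a + 1) * K ≤ b * K := Nat.mul_le_mul_right K (by omega)
    have h2 : (a + 1) * K = a * K + K := by ring
    omega
  · subst h'; omega
  · have h1 : (b + 1) * K ≤ a * K := Nat.mul_le_mul_right K (by omega)
    have h2 : (b + 1) * K = b * K + K := by ring
    omega

/-! #### The merge construction -/

section Merge

variable {M n m : ℕ}

/-- Value component of the sorting key. -/
def sVal (g : Fin n → Fin (M + 1)) (h : Fin m → Fin (M + 1)) : Fin n ⊕ Fin m → ℕ :=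
  Sum.elim (fun i => (g i : ℕ)) (fun j => (h j : ℕ))

/-- Tie-breaking component of the sorting key. -/
def sInner (β2 : Fin m → Bool) : Fin n ⊕ Fin m → ℕ :=
  Sum.elim (fun i => (n + m) + (i : ℕ)) (fun j => (cond (β2 j) 0 (2 * (n + m))) + (j : ℕ))

/-- Sorting key for merging two `P`-partitions. -/
def skey (β2 : Fin m → Bool) (g : Fin n → Fin (M + 1)) (h : Fin m → Fin (M + 1))
    (e : Fin n ⊕ Fin m) : ℕ :=
  sVal g h e * (3 * (n + m)) + sInner β2 e

lemma sVal_inl (g : Fin n → Fin (M + 1)) (h : Fin m → Fin (M + 1)) (i : Fin n) :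
    sVal g h (Sum.inl i) = (g i : ℕ) := rfl

lemma sVal_inr (g : Fin n → Fin (M + 1)) (h : Fin m → Fin (M + 1)) (j : Fin m) :
    sVal g h (Sum.inr j) = (h j : ℕ) := rfl

lemma sInner_inl (β2 : Fin m → Bool) (i : Fin n) :
    sInner β2 (Sum.inl i) = (n + m) + (i : ℕ) := rfl

lemma sInner_inr (β2 : Fin m → Bool) (j : Fin m) :
    sInner (n := n) β2 (Sum.inr j) = (cond (β2 j) 0 (2 * (n + m))) + (j : ℕ) := rfl

lemma sInner_lt (β2 : Fin m → Bool) (e : Fin n ⊕ Fin m) : sInner β2 e < 3 * (n + m) := by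
  rcases e with i | j
  · have := i.isLt; rw [sInner_inl]; omega
  · have := j.isLt
    rw [sInner_inr]
    rcases hb : β2 j
    · rw [Bool.cond_false]; omega
    · rw [Bool.cond_true]; omega

lemma skey_lt_iff (β2 : Fin m → Bool) (g : Fin n → Fin (M + 1)) (h : Fin m → Fin (M + 1))
    (e e' : Fin n ⊕ Fin m) :
    skey β2 g h e < skey β2 g h e' ↔
      sVal g h e < sVal g h e' ∨ (sVal g h e = sVal g h e' ∧ sInner β2 e < sInner β2 e') :=
  lex_nat_lt (sInner_lt β2 e) (sInner_lt β2 e')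

lemma skey_injective (β2 : Fin m → Bool) (g : Fin n → Fin (M + 1)) (h : Fin m → Fin (M + 1)) :
    Function.Injective (skey β2 g h) := by
  intro e e' hee
  obtain ⟨hv, hi⟩ := lex_nat_eq (sInner_lt β2 e) (sInner_lt β2 e') hee
  rcases e with i | j <;> rcases e' with i' | j'
  · exact congrArg Sum.inl (Fin.ext (by rw [sInner_inl, sInner_inl] at hi; omega))
  · exfalso
    have := i.isLt; have := j'.isLt
    rw [sInner_inl, sInner_inr] at hi
    rcases hb : β2 j' <;> rw [hb] at hi <;> simp at hi <;> omega
  · exfalso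
    have := j.isLt; have := i'.isLt
    rw [sInner_inr, sInner_inl] at hi
    rcases hb : β2 j <;> rw [hb] at hi <;> simp at hi <;> omega
  · have := j.isLt; have := j'.isLt
    rw [sInner_inr, sInner_inr] at hi
    rcases hb : β2 j <;> rcases hb' : β2 j' <;> rw [hb, hb'] at hi <;> simp at hi <;>
      first
        | exact congrArg Sum.inr (Fin.ext (by omega))
        | (exfalso; omega)

/-- The image of the sorting key. -/
def mergeFinset (β2 : Fin m → Bool) (g : Fin n → Fin (M + 1)) (h : Fin m → Fin (M + 1)) :
    Finset ℕ :=
  Finset.univ.image (skey β2 g h)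

lemma mergeFinset_card (β2 : Fin m → Bool) (g : Fin n → Fin (M + 1))
    (h : Fin m → Fin (M + 1)) : (mergeFinset β2 g h).card = n + m := by
  rw [mergeFinset, Finset.card_image_of_injective _ (skey_injective β2 g h), Finset.card_univ]
  simp

/-- The rank map induced by the sorting key. -/
def mergeFun (β2 : Fin m → Bool) (g : Fin n → Fin (M + 1)) (h : Fin m → Fin (M + 1))
    (e : Fin n ⊕ Fin m) : Fin (n + m) :=
  ((mergeFinset β2 g h).orderIsoOfFin (mergeFinset_card β2 g h)).symm
    ⟨skey β2 g h e, Finset.mem_image_of_mem _ (Finset.mem_univ e)⟩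

lemma mergeFun_lt_iff (β2 : Fin m → Bool) (g : Fin n → Fin (M + 1)) (h : Fin m → Fin (M + 1))
    (e e' : Fin n ⊕ Fin m) :
    mergeFun β2 g h e < mergeFun β2 g h e' ↔ skey β2 g h e < skey β2 g h e' := by
  rw [mergeFun, mergeFun, OrderIso.lt_iff_lt]; exact Subtype.mk_lt_mk

lemma mergeFun_injective (β2 : Fin m → Bool) (g : Fin n → Fin (M + 1))
    (h : Fin m → Fin (M + 1)) : Function.Injective (mergeFun β2 g h) := by
  intro e e' hee
  apply skey_injective β2 g h
  rcases lt_trichotomy (skey β2 g h e) (skey β2 g h e') with hc | hc | hc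
  · exact absurd ((mergeFun_lt_iff β2 g h e e').2 hc) (by rw [hee]; exact lt_irrefl _)
  · exact hc
  · exact absurd ((mergeFun_lt_iff β2 g h e' e).2 hc) (by rw [hee]; exact lt_irrefl _)

/-- The merging bijection. -/
def mergeEquiv (β2 : Fin m → Bool) (g : Fin n → Fin (M + 1)) (h : Fin m → Fin (M + 1)) :
    (Fin n ⊕ Fin m) ≃ Fin (n + m) :=
  Equiv.ofBijective _ ((Fintype.bijective_iff_injective_and_card _).2
    ⟨mergeFun_injective β2 g h, by simp⟩)

lemma mergeEquiv_apply (β2 : Fin m → Bool) (g : Fin n → Fin (M + 1))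
    (h : Fin m → Fin (M + 1)) (e : Fin n ⊕ Fin m) :
    mergeEquiv β2 g h e = mergeFun β2 g h e := rfl

lemma mergeEquiv_lt_iff (β2 : Fin m → Bool) (g : Fin n → Fin (M + 1))
    (h : Fin m → Fin (M + 1)) (e e' : Fin n ⊕ Fin m) :
    mergeEquiv β2 g h e < mergeEquiv β2 g h e' ↔ skey β2 g h e < skey β2 g h e' :=
  mergeFun_lt_iff β2 g h e e'

variable (α : SPerm n) (β : SPerm m)

/-- The merged signed permutation. -/
def mergePerm (g : Fin n → Fin (M + 1)) (h : Fin m → Fin (M + 1)) : SPerm (n + m) :=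
  ⟨(mergeEquiv β.2 g h).symm.trans ((Equiv.sumCongr α.1 β.1).trans finSumFinEquiv),
   fun t => Sum.elim α.2 β.2 ((mergeEquiv β.2 g h).symm t)⟩

/-- The merged sequence. -/
def mergeSeq (g : Fin n → Fin (M + 1)) (h : Fin m → Fin (M + 1)) :
    Fin (n + m) → Fin (M + 1) :=
  fun t => Sum.elim g h ((mergeEquiv β.2 g h).symm t)

lemma mergeSeq_apply (g : Fin n → Fin (M + 1)) (h : Fin m → Fin (M + 1)) (e : Fin n ⊕ Fin m) :
    mergeSeq β g h (mergeEquiv β.2 g h e) = Sum.elim g h e := by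
  rw [mergeSeq, Equiv.symm_apply_apply]

lemma sval_mergePerm_inl (g : Fin n → Fin (M + 1)) (h : Fin m → Fin (M + 1)) (i : Fin n) :
    sval (mergePerm α β g h) (mergeEquiv β.2 g h (Sum.inl i)) = sval α i := by
  unfold mergePerm sval
  simp [Equiv.symm_apply_apply]

lemma sval_mergePerm_inr (g : Fin n → Fin (M + 1)) (h : Fin m → Fin (M + 1)) (j : Fin m) :
    sval (mergePerm α β g h) (mergeEquiv β.2 g h (Sum.inr j)) =
      sval β j + (if 0 < sval β j then (n : ℤ) else -(n : ℤ)) := by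
  unfold mergePerm sval
  rcases hb : β.2 j <;> simp [Equiv.symm_apply_apply, hb] <;> omega

/-! #### Comparing values of signed permutations -/

lemma sval_eq_sval {N N' : ℕ} {π : SPerm N} {π' : SPerm N'} {i : Fin N} {i' : Fin N'}
    (h : sval π i = sval π' i') : (π.1 i : ℕ) = (π'.1 i' : ℕ) ∧ π.2 i = π'.2 i' := by
  unfold sval at h
  rcases h1 : π.2 i <;> rcases h2 : π'.2 i' <;> rw [h1, h2] at h <;> simp at h <;>
    first
      | exact ⟨by omega, rfl⟩
      | exact absurd h (by omega)

lemma sval_bshift_components {N : ℕ} {γ : SPerm N} {t : Fin N} {β : SPerm m} {j : Fin m}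
    (h : sval γ t = sval β j + (if 0 < sval β j then (n : ℤ) else -(n : ℤ))) :
    (γ.1 t : ℕ) = n + (β.1 j : ℕ) ∧ γ.2 t = β.2 j := by
  constructor
  · have h1 := sval_natAbs γ t
    have h2 : (sval γ t).natAbs = (sval β j).natAbs + n := by
      rw [h]; exact bshift_natAbs (sval_ne_zero β j)
    have h3 := sval_natAbs β j
    omega
  · have h4 : sval γ t < 0 ↔ sval β j < 0 := by
      rw [h]; exact bshift_neg_iff (sval_ne_zero β j)
    rw [sval_neg_iff, sval_neg_iff] at h4
    rcases hb : γ.2 t <;> rcases hb' : β.2 j <;> simp [hb, hb'] at h4 <;> simp [h4]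

/-! #### Key comparisons for valid sequences -/

lemma skey_inl_lt {g : Fin n → Fin (M + 1)} {h : Fin m → Fin (M + 1)}
    (hg : seqOKB n (desB α) g) {a b : Fin n} (hab : a < b) :
    skey β.2 g h (Sum.inl a) < skey β.2 g h (Sum.inl b) := by
  rw [skey_lt_iff]
  have hle : g a ≤ g b := seqOKB_mono hg (le_of_lt hab)
  rcases eq_or_lt_of_le hle with heq | hlt
  · refine Or.inr ⟨by rw [sVal_inl, sVal_inl, heq], ?_⟩
    rw [sInner_inl, sInner_inl]
    rw [Fin.lt_def] at hab; omega
  · exact Or.inl (by rw [sVal_inl, sVal_inl]; exact hlt)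

lemma skey_inr_lt {g : Fin n → Fin (M + 1)} {h : Fin m → Fin (M + 1)}
    (hh : seqOKB m (desB β) h) {a b : Fin m} (hab : a < b) :
    skey β.2 g h (Sum.inr a) < skey β.2 g h (Sum.inr b) := by
  rw [skey_lt_iff]
  have hle : h a ≤ h b := seqOKB_mono hh (le_of_lt hab)
  rcases eq_or_lt_of_le hle with heq | hlt
  · refine Or.inr ⟨by rw [sVal_inr, sVal_inr, heq], ?_⟩
    rw [sInner_inr, sInner_inr]
    have hal := a.isLt; have hbl := b.isLt
    have habn : (a : ℕ) < (b : ℕ) := by rw [Fin.lt_def] at hab; exact hab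
    rcases hba : β.2 a <;> rcases hbb : β.2 b
    · rw [Bool.cond_false]; omega
    · exfalso
      have h1 : sval β b < sval β a := by
        have h2 : sval β b < 0 := (sval_neg_iff β b).2 hbb
        have h3 : 0 < sval β a := (sval_pos_iff β a).2 hba
        omega
      have h5 := seqOKB_strict hh hab h1
      rw [heq] at h5; exact lt_irrefl _ h5
    · rw [Bool.cond_true, Bool.cond_false]; omega
    · rw [Bool.cond_true]; omega
  · exact Or.inl (by rw [sVal_inr, sVal_inr]; exact hlt)

lemma mergeEquiv_inl_lt {g : Fin n → Fin (M + 1)} {h : Fin m → Fin (M + 1)}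
    (hg : seqOKB n (desB α) g) {a b : Fin n} (hab : a < b) :
    mergeEquiv β.2 g h (Sum.inl a) < mergeEquiv β.2 g h (Sum.inl b) :=
  (mergeEquiv_lt_iff β.2 g h _ _).2 (skey_inl_lt α β hg hab)

lemma mergeEquiv_inr_lt {g : Fin n → Fin (M + 1)} {h : Fin m → Fin (M + 1)}
    (hh : seqOKB m (desB β) h) {a b : Fin m} (hab : a < b) :
    mergeEquiv β.2 g h (Sum.inr a) < mergeEquiv β.2 g h (Sum.inr b) :=
  (mergeEquiv_lt_iff β.2 g h _ _).2 (skey_inr_lt β hh hab)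

lemma mergeEquiv_cover (β2 : Fin m → Bool) (g : Fin n → Fin (M + 1))
    (h : Fin m → Fin (M + 1)) (t : Fin (n + m)) :
    (∃ i, mergeEquiv β2 g h (Sum.inl i) = t) ∨ (∃ j, mergeEquiv β2 g h (Sum.inr j) = t) := by
  rcases he : (mergeEquiv β2 g h).symm t with i | j
  · exact Or.inl ⟨i, by rw [← he, Equiv.apply_symm_apply]⟩
  · exact Or.inr ⟨j, by rw [← he, Equiv.apply_symm_apply]⟩

lemma mergePerm_isShuffle {g : Fin n → Fin (M + 1)} {h : Fin m → Fin (M + 1)}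
    (hg : seqOKB n (desB α) g) (hh : seqOKB m (desB β) h) :
    IsShuffleB α β (mergePerm α β g h) :=
  ⟨fun i => mergeEquiv β.2 g h (Sum.inl i), fun j => mergeEquiv β.2 g h (Sum.inr j),
   fun _ _ hab => mergeEquiv_inl_lt α β hg hab,
   fun _ _ hab => mergeEquiv_inr_lt β hh hab,
   fun i => sval_mergePerm_inl α β g h i,
   fun j => sval_mergePerm_inr α β g h j,
   fun t => mergeEquiv_cover β.2 g h t⟩

/-! #### The merged sequence is admissible -/

lemma mergeSeq_seqOKB {g : Fin n → Fin (M + 1)} {h : Fin m → Fin (M + 1)}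
    (hg : seqOKB n (desB α) g) (hh : seqOKB m (desB β) h) :
    seqOKB (n + m) (desB (mergePerm α β g h)) (mergeSeq β g h) := by
  constructor
  · intro i j hij
    obtain ⟨e, rfl⟩ : ∃ e, mergeEquiv β.2 g h e = i :=
      ⟨_, (mergeEquiv β.2 g h).apply_symm_apply i⟩
    obtain ⟨e', rfl⟩ : ∃ e', mergeEquiv β.2 g h e' = j :=
      ⟨_, (mergeEquiv β.2 g h).apply_symm_apply j⟩
    have hkey : skey β.2 g h e < skey β.2 g h e' := by
      rw [← mergeEquiv_lt_iff β.2 g h, Fin.lt_def]; omega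
    rw [skey_lt_iff] at hkey
    rw [mergeSeq_apply, mergeSeq_apply]
    constructor
    · -- weak increase
      have hle : sVal g h e ≤ sVal g h e' := by
        rcases hkey with hlt | ⟨heq, -⟩
        · exact le_of_lt hlt
        · exact le_of_eq heq
      rcases e with i0 | j0 <;> rcases e' with i1 | j1 <;>
        simp only [sVal_inl, sVal_inr] at hle <;> exact hle
    · intro hdes
      have hsv : sval (mergePerm α β g h) (mergeEquiv β.2 g h e') <
          sval (mergePerm α β g h) (mergeEquiv β.2 g h e) := (mem_desB_succ hij).1 hdes
      rcases hkey with hlt | ⟨heq, hinner⟩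
      · rcases e with i0 | j0 <;> rcases e' with i1 | j1 <;>
          simp only [sVal_inl, sVal_inr] at hlt <;> exact hlt
      · exfalso
        rcases e with i0 | j0 <;> rcases e' with i1 | j1
        · -- inl inl
          rw [sval_mergePerm_inl, sval_mergePerm_inl] at hsv
          have h01 : i0 < i1 := by
            rw [sInner_inl, sInner_inl] at hinner; rw [Fin.lt_def]; omega
          have h5 := seqOKB_strict hg h01 hsv
          simp only [sVal_inl] at heq
          rw [Fin.lt_def] at h5; omega
        · -- inl inr
          rw [sval_mergePerm_inl, sval_mergePerm_inr] at hsv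
          have hb : β.2 j1 = false := by
            rcases hbb : β.2 j1
            · rfl
            · exfalso
              rw [sInner_inl, sInner_inr, hbb, Bool.cond_true] at hinner
              have := i0.isLt; have := j1.isLt; omega
          have h3 : 0 < sval β j1 := (sval_pos_iff β j1).2 hb
          have h4 : sval α i0 ≤ (n : ℤ) := sval_le α i0
          rw [if_pos h3] at hsv
          omega
        · -- inr inl
          rw [sval_mergePerm_inr, sval_mergePerm_inl] at hsv
          have hb : β.2 j0 = true := by
            rcases hbb : β.2 j0
            · exfalso
              rw [sInner_inr, sInner_inl, hbb, Bool.cond_false] at hinner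
              have := i1.isLt; have := j0.isLt; omega
            · rfl
          have h3 : sval β j0 < 0 := (sval_neg_iff β j0).2 hb
          have h4 : -(n : ℤ) ≤ sval α i1 := neg_le_sval α i1
          rw [if_neg (by omega)] at hsv
          omega
        · -- inr inr
          rw [sval_mergePerm_inr, sval_mergePerm_inr] at hsv
          rw [sInner_inr, sInner_inr] at hinner
          have hj0 := j0.isLt; have hj1 := j1.isLt
          rcases hb0 : β.2 j0 <;> rcases hb1 : β.2 j1
          · -- both positive
            rw [hb0, hb1, Bool.cond_false] at hinner
            have h01 : j0 < j1 := by rw [Fin.lt_def]; omega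
            have h5 : sval β j1 < sval β j0 :=
              (bshift_lt_iff (sval_ne_zero β j1) (sval_ne_zero β j0)).1 hsv
            have h6 := seqOKB_strict hh h01 h5
            simp only [sVal_inr] at heq
            rw [Fin.lt_def] at h6; omega
          · -- j0 positive, j1 negative: impossible tie order
            rw [hb0, hb1, Bool.cond_false, Bool.cond_true] at hinner
            omega
          · -- j0 negative, j1 positive: no descent possible
            have h2 : sval β j0 < 0 := (sval_neg_iff β j0).2 hb0
            have h3 : 0 < sval β j1 := (sval_pos_iff β j1).2 hb1
            rw [if_pos h3] at hsv
            rw [if_neg (show ¬ (0:ℤ) < sval β j0 by omega)] at hsv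
            omega
          · -- both negative
            rw [hb0, hb1, Bool.cond_true] at hinner
            have h01 : j0 < j1 := by rw [Fin.lt_def]; omega
            have h5 : sval β j1 < sval β j0 :=
              (bshift_lt_iff (sval_ne_zero β j1) (sval_ne_zero β j0)).1 hsv
            have h6 := seqOKB_strict hh h01 h5
            simp only [sVal_inr] at heq
            rw [Fin.lt_def] at h6; omega
  · intro j hj hdes
    have hsv : sval (mergePerm α β g h) j < 0 := (mem_desB_zero hj).1 hdes
    obtain ⟨e, rfl⟩ : ∃ e, mergeEquiv β.2 g h e = j :=
      ⟨_, (mergeEquiv β.2 g h).apply_symm_apply j⟩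
    have hmin : ∀ e', ¬ skey β.2 g h e' < skey β.2 g h e := by
      intro e' hlt
      have h2 := (mergeEquiv_lt_iff β.2 g h e' e).2 hlt
      rw [Fin.lt_def] at h2; omega
    rw [mergeSeq_apply]
    rcases e with i0 | j0
    · rw [sval_mergePerm_inl] at hsv
      have h0n : 0 < n := i0.pos
      set z : Fin n := ⟨0, h0n⟩ with hz
      have hz0 : (z : ℕ) = 0 := rfl
      obtain ⟨hm1, hm2⟩ := not_or.1 ((skey_lt_iff β.2 g h (Sum.inl z) (Sum.inl i0)).not.1
        (hmin (Sum.inl z)))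
      have hle : g z ≤ g i0 := seqOKB_mono hg (show z ≤ i0 by rw [Fin.le_def]; omega)
      rw [sVal_inl, sVal_inl] at hm1
      have heqf : g z = g i0 := Fin.ext (by rw [Fin.le_def] at hle; omega)
      have hnb : ¬ sInner β.2 (Sum.inl z) < sInner β.2 (Sum.inl i0) :=
        fun hb => hm2 ⟨by rw [sVal_inl, sVal_inl, heqf], hb⟩
      rw [sInner_inl, sInner_inl] at hnb
      have hi0 : i0 = z := Fin.ext (by omega)
      have hsv0 : sval α z < 0 := by rw [hi0] at hsv; exact hsv
      have hdesα : (0 : ℕ) ∈ desB α := (mem_desB_zero hz0).2 hsv0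
      have hgz := hg.2 z rfl hdesα
      simp only [Sum.elim_inl]
      rw [hi0]
      exact hgz
    · rw [sval_mergePerm_inr] at hsv
      have h0m : 0 < m := j0.pos
      set z : Fin m := ⟨0, h0m⟩ with hz
      have hz0 : (z : ℕ) = 0 := rfl
      obtain ⟨hm1, hm2⟩ := not_or.1 ((skey_lt_iff β.2 g h (Sum.inr z) (Sum.inr j0)).not.1
        (hmin (Sum.inr z)))
      have hle : h z ≤ h j0 := seqOKB_mono hh (show z ≤ j0 by rw [Fin.le_def]; omega)
      rw [sVal_inr, sVal_inr] at hm1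
      have heqf : h z = h j0 := Fin.ext (by rw [Fin.le_def] at hle; omega)
      have hnb : ¬ sInner β.2 (Sum.inr z) < sInner β.2 (Sum.inr j0) :=
        fun hb => hm2 ⟨by rw [sVal_inr, sVal_inr, heqf], hb⟩
      have hbj0 : β.2 j0 = true := by
        rcases hb : β.2 j0
        · exfalso
          have h3 : 0 < sval β j0 := (sval_pos_iff β j0).2 hb
          rw [if_pos h3] at hsv; omega
        · rfl
      have hj00 : j0 = z := by
        rcases hbz : β.2 z
        · exfalso
          have hne : j0 ≠ z := by
            intro hx; rw [hx, hbz] at hbj0; exact Bool.false_ne_true hbj0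
          have hj0pos : 0 < (j0 : ℕ) := by
            rcases Nat.eq_zero_or_pos (j0 : ℕ) with h0 | h0
            · exact absurd (Fin.ext (by omega) : j0 = z) hne
            · exact h0
          have hzj : z < j0 := by rw [Fin.lt_def]; omega
          have h5 : sval β j0 < sval β z := by
            have h6 := (sval_neg_iff β j0).2 hbj0
            have h7 := (sval_pos_iff β z).2 hbz
            omega
          have h8 := seqOKB_strict hh hzj h5
          rw [heqf] at h8; exact lt_irrefl _ h8
        · rw [sInner_inr, sInner_inr, hbz, hbj0, Bool.cond_true] at hnb
          exact Fin.ext (by omega)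
      have hsvz : sval β z < 0 := by
        have h6 := (sval_neg_iff β j0).2 hbj0
        rw [hj00] at h6; exact h6
      have hdesβ : (0 : ℕ) ∈ desB β := (mem_desB_zero hz0).2 hsvz
      have hhz := hh.2 z rfl hdesβ
      simp only [Sum.elim_inr]
      rw [hj00]
      exact hhz

/-! #### Uniqueness of shuffle witnesses -/

lemma shuffle_witness_unique {γ : SPerm (n + m)}
    {φ₁ φ₂ : Fin n → Fin (n + m)} {ψ₁ ψ₂ : Fin m → Fin (n + m)}
    (hφ₁ : ∀ a b : Fin n, a < b → φ₁ a < φ₁ b) (hψ₁ : ∀ a b : Fin m, a < b → ψ₁ a < ψ₁ b)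
    (hvφ₁ : ∀ i, sval γ (φ₁ i) = sval α i)
    (hvψ₁ : ∀ j, sval γ (ψ₁ j) = sval β j + (if 0 < sval β j then (n : ℤ) else -(n : ℤ)))
    (hcov₁ : ∀ t, (∃ i, φ₁ i = t) ∨ (∃ j, ψ₁ j = t))
    (hφ₂ : ∀ a b : Fin n, a < b → φ₂ a < φ₂ b) (hψ₂ : ∀ a b : Fin m, a < b → ψ₂ a < ψ₂ b)
    (hvφ₂ : ∀ i, sval γ (φ₂ i) = sval α i)
    (hvψ₂ : ∀ j, sval γ (ψ₂ j) = sval β j + (if 0 < sval β j then (n : ℤ) else -(n : ℤ)))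
    (hcov₂ : ∀ t, (∃ i, φ₂ i = t) ∨ (∃ j, ψ₂ j = t)) :
    φ₁ = φ₂ ∧ ψ₁ = ψ₂ := by
  classical
  set T : Finset (Fin (n + m)) := Finset.univ.filter (fun t => (γ.1 t : ℕ) < n) with hT
  set U : Finset (Fin (n + m)) := Finset.univ.filter (fun t => ¬ (γ.1 t : ℕ) < n) with hU
  have hmemφ : ∀ (φ : Fin n → Fin (n + m)), (∀ i, sval γ (φ i) = sval α i) →
      ∀ i, φ i ∈ T := by
    intro φ hv i
    rw [hT, Finset.mem_filter]
    refine ⟨Finset.mem_univ _, ?_⟩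
    have h1 := (sval_eq_sval (hv i)).1
    have := (α.1 i).isLt
    omega
  have hmemψ : ∀ (ψ : Fin m → Fin (n + m)),
      (∀ j, sval γ (ψ j) = sval β j + (if 0 < sval β j then (n : ℤ) else -(n : ℤ))) →
      ∀ j, ψ j ∈ U := by
    intro ψ hv j
    rw [hU, Finset.mem_filter]
    refine ⟨Finset.mem_univ _, ?_⟩
    have h1 := (sval_bshift_components (hv j)).1
    omega
  have himg : Finset.univ.image φ₁ = T := by
    apply Finset.eq_of_subset_of_card_le
    · intro t ht
      obtain ⟨i, -, rfl⟩ := Finset.mem_image.1 ht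
      exact hmemφ φ₁ hvφ₁ i
    · -- T.card ≤ (image φ₁).card : show T ⊆ image φ₁
      apply Finset.card_le_card
      intro t ht
      rcases hcov₁ t with ⟨i, rfl⟩ | ⟨j, rfl⟩
      · exact Finset.mem_image.2 ⟨i, Finset.mem_univ _, rfl⟩
      · exfalso
        have h1 := (sval_bshift_components (hvψ₁ j)).1
        rw [hT, Finset.mem_filter] at ht
        omega
  have hcardT : T.card = n := by
    rw [← himg, Finset.card_image_of_injective _
      (show StrictMono φ₁ from fun a b h => hφ₁ a b h).injective,
      Finset.card_univ, Fintype.card_fin]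
  have himgU : Finset.univ.image ψ₁ = U := by
    apply Finset.eq_of_subset_of_card_le
    · intro t ht
      obtain ⟨j, -, rfl⟩ := Finset.mem_image.1 ht
      exact hmemψ ψ₁ hvψ₁ j
    · apply Finset.card_le_card
      intro t ht
      rcases hcov₁ t with ⟨i, rfl⟩ | ⟨j, rfl⟩
      · exfalso
        have h1 := (sval_eq_sval (hvφ₁ i)).1
        have := (α.1 i).isLt
        rw [hU, Finset.mem_filter] at ht
        omega
      · exact Finset.mem_image.2 ⟨j, Finset.mem_univ _, rfl⟩
  have hcardU : U.card = m := by
    have h1 : T.card + U.card = n + m := by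
      rw [hT, hU]
      rw [Finset.card_filter_add_card_filter_not]
      simp
    omega
  constructor
  · rw [Finset.orderEmbOfFin_unique hcardT (hmemφ φ₁ hvφ₁) (fun a b h => hφ₁ a b h),
      Finset.orderEmbOfFin_unique hcardT (hmemφ φ₂ hvφ₂) (fun a b h => hφ₂ a b h)]
  · rw [Finset.orderEmbOfFin_unique hcardU (hmemψ ψ₁ hvψ₁) (fun a b h => hψ₁ a b h),
      Finset.orderEmbOfFin_unique hcardU (hmemψ ψ₂ hvψ₂) (fun a b h => hψ₂ a b h)]

/-! #### Right inverse of the merge map -/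

lemma merge_right_inv {γ : SPerm (n + m)} {k : Fin (n + m) → Fin (M + 1)}
    (hk : seqOKB (n + m) (desB γ) k)
    {φ : Fin n → Fin (n + m)} {ψ : Fin m → Fin (n + m)}
    (hφ : ∀ a b : Fin n, a < b → φ a < φ b) (hψ : ∀ a b : Fin m, a < b → ψ a < ψ b)
    (hvφ : ∀ i, sval γ (φ i) = sval α i)
    (hvψ : ∀ j, sval γ (ψ j) = sval β j + (if 0 < sval β j then (n : ℤ) else -(n : ℤ)))
    (hcov : ∀ t, (∃ i, φ i = t) ∨ (∃ j, ψ j = t)) :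
    mergePerm α β (fun i => k (φ i)) (fun j => k (ψ j)) = γ ∧
      mergeSeq β (fun i => k (φ i)) (fun j => k (ψ j)) = k := by
  classical
  set g : Fin n → Fin (M + 1) := fun i => k (φ i) with hgdef
  set h : Fin m → Fin (M + 1) := fun j => k (ψ j) with hhdef
  have hg : seqOKB n (desB α) g := seqOKB_pullback hφ
    (fun a b hab => by rw [hvφ b, hvφ a]; exact hab)
    (fun a ha => by rw [hvφ a]; exact ha) hk
  have hh : seqOKB m (desB β) h := seqOKB_pullback hψ
    (fun a b hab => by
      rw [hvψ b, hvψ a]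
      exact (bshift_lt_iff (sval_ne_zero β b) (sval_ne_zero β a)).2 hab)
    (fun a ha => by rw [hvψ a]; exact (bshift_neg_iff (sval_ne_zero β a)).2 ha) hk
  have hGlt : ∀ e e' : Fin n ⊕ Fin m,
      Sum.elim φ ψ e < Sum.elim φ ψ e' → skey β.2 g h e < skey β.2 g h e' := by
    have reflφ : ∀ {a b : Fin n}, φ a < φ b → a < b := by
      intro a b hab
      rcases lt_trichotomy a b with hc | hc | hc
      · exact hc
      · subst hc; exact absurd hab (lt_irrefl _)
      · exact absurd hab (not_lt.2 (le_of_lt (hφ _ _ hc)))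
    have reflψ : ∀ {a b : Fin m}, ψ a < ψ b → a < b := by
      intro a b hab
      rcases lt_trichotomy a b with hc | hc | hc
      · exact hc
      · subst hc; exact absurd hab (lt_irrefl _)
      · exact absurd hab (not_lt.2 (le_of_lt (hψ _ _ hc)))
    intro e e' hlt
    have hkle : k (Sum.elim φ ψ e) ≤ k (Sum.elim φ ψ e') := seqOKB_mono hk (le_of_lt hlt)
    rcases e with a | a <;> rcases e' with b | b
    · exact skey_inl_lt α β hg (reflφ hlt)
    · -- inl, inr
      rw [skey_lt_iff]
      rcases eq_or_lt_of_le hkle with heq | hklt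
      · right
        constructor
        · show (k (φ a) : ℕ) = (k (ψ b) : ℕ)
          exact congrArg Fin.val heq
        · have hbb : β.2 b = false := by
            rcases hb : β.2 b
            · rfl
            · exfalso
              have h5 : sval γ (ψ b) < sval γ (φ a) := by
                rw [hvφ a, hvψ b]
                have h6 : sval β b < 0 := (sval_neg_iff β b).2 hb
                have h7 : -(n : ℤ) ≤ sval α a := neg_le_sval α a
                rw [if_neg (by omega)]; omega
              have h8 := seqOKB_strict hk hlt h5
              rw [heq] at h8; exact lt_irrefl _ h8
          rw [sInner_inl, sInner_inr, hbb, Bool.cond_false]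
          have := a.isLt; have := b.isLt; omega
      · exact Or.inl hklt
    · -- inr, inl
      rw [skey_lt_iff]
      rcases eq_or_lt_of_le hkle with heq | hklt
      · right
        constructor
        · show (k (ψ a) : ℕ) = (k (φ b) : ℕ)
          exact congrArg Fin.val heq
        · have hbb : β.2 a = true := by
            rcases hb : β.2 a
            · exfalso
              have h5 : sval γ (φ b) < sval γ (ψ a) := by
                rw [hvφ b, hvψ a]
                have h6 : 0 < sval β a := (sval_pos_iff β a).2 hb
                have h7 : sval α b ≤ (n : ℤ) := sval_le α b
                rw [if_pos h6]; omega
              have h8 := seqOKB_strict hk hlt h5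
              rw [heq] at h8; exact lt_irrefl _ h8
            · rfl
          rw [sInner_inr, sInner_inl, hbb, Bool.cond_true]
          have := a.isLt; have := b.isLt; omega
      · exact Or.inl hklt
    · exact skey_inr_lt β hh (reflψ hlt)
  have hGne : ∀ (a : Fin n) (b : Fin m), φ a ≠ ψ b := by
    intro a b hab
    have h1 := (sval_eq_sval (hvφ a)).1
    have h2 := (sval_bshift_components (hvψ b)).1
    have := (α.1 a).isLt
    rw [hab] at h1
    omega
  have hφmono : StrictMono φ := fun a b hab => hφ a b hab
  have hψmono : StrictMono ψ := fun a b hab => hψ a b hab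
  have hGinj : Function.Injective (Sum.elim φ ψ) := by
    intro e e' hee
    rcases e with a | a <;> rcases e' with b | b
    · exact congrArg Sum.inl (hφmono.injective hee)
    · exact absurd hee (hGne a b)
    · exact absurd hee.symm (hGne b a)
    · exact congrArg Sum.inr (hψmono.injective hee)
  have hGbij : Function.Bijective (Sum.elim φ ψ) :=
    (Fintype.bijective_iff_injective_and_card _).2 ⟨hGinj, by simp⟩
  set G : (Fin n ⊕ Fin m) ≃ Fin (n + m) := Equiv.ofBijective _ hGbij with hGdef
  have hGapp : ∀ e, G e = Sum.elim φ ψ e := fun e => rfl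
  have hEG : ∀ e, mergeEquiv β.2 g h e = Sum.elim φ ψ e := by
    have hmono : StrictMono (fun t => G ((mergeEquiv β.2 g h).symm t)) := by
      intro t t' htt
      have h1 : skey β.2 g h ((mergeEquiv β.2 g h).symm t) <
          skey β.2 g h ((mergeEquiv β.2 g h).symm t') := by
        rw [← mergeEquiv_lt_iff β.2 g h]
        simpa using htt
      rcases lt_trichotomy (G ((mergeEquiv β.2 g h).symm t))
        (G ((mergeEquiv β.2 g h).symm t')) with hc | hc | hc
      · exact hc
      · exfalso
        have h2 := (mergeEquiv β.2 g h).symm.injective (G.injective hc)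
        rw [h2] at h1; exact lt_irrefl _ h1
      · exfalso
        rw [hGapp, hGapp] at hc
        have h3 := hGlt _ _ hc
        exact lt_irrefl _ (lt_trans h1 h3)
    have hid : (fun t => G ((mergeEquiv β.2 g h).symm t)) = id := by
      apply (StrictMono.range_inj hmono strictMono_id).1
      rw [Set.range_id]
      apply Set.range_eq_univ.2
      intro t
      exact ⟨mergeEquiv β.2 g h (G.symm t), by simp⟩
    intro e
    have h4 := congrFun hid (mergeEquiv β.2 g h e)
    simp only [Equiv.symm_apply_apply, id_eq] at h4
    rw [← hGapp]
    exact h4.symm ▸ rfl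
  constructor
  · have h1 : (mergePerm α β g h).1 = γ.1 := by
      apply Equiv.ext
      intro t
      obtain ⟨e, rfl⟩ : ∃ e, mergeEquiv β.2 g h e = t :=
        ⟨_, (mergeEquiv β.2 g h).apply_symm_apply t⟩
      have hL : (mergePerm α β g h).1 (mergeEquiv β.2 g h e) =
          finSumFinEquiv (Sum.map α.1 β.1 e) := by
        simp [mergePerm, Equiv.symm_apply_apply]
      rw [hL, hEG e]
      rcases e with a | a
      · have h2 := (sval_eq_sval (hvφ a)).1
        apply Fin.ext
        simp only [Sum.map_inl, finSumFinEquiv_apply_left, Fin.coe_castAdd, Sum.elim_inl]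
        omega
      · have h2 := (sval_bshift_components (hvψ a)).1
        apply Fin.ext
        simp only [Sum.map_inr, finSumFinEquiv_apply_right, Fin.coe_natAdd, Sum.elim_inr]
        omega
    have h2 : (mergePerm α β g h).2 = γ.2 := by
      funext t
      obtain ⟨e, rfl⟩ : ∃ e, mergeEquiv β.2 g h e = t :=
        ⟨_, (mergeEquiv β.2 g h).apply_symm_apply t⟩
      have hL : (mergePerm α β g h).2 (mergeEquiv β.2 g h e) = Sum.elim α.2 β.2 e := by
        simp [mergePerm, Equiv.symm_apply_apply]
      rw [hL, hEG e]
      rcases e with a | a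
      · exact ((sval_eq_sval (hvφ a)).2).symm
      · exact ((sval_bshift_components (hvψ a)).2).symm
    exact Prod.ext h1 h2
  · funext t
    obtain ⟨e, rfl⟩ : ∃ e, mergeEquiv β.2 g h e = t :=
      ⟨_, (mergeEquiv β.2 g h).apply_symm_apply t⟩
    rw [mergeSeq_apply, hEG e]
    rcases e with a | a <;> rfl

/-! #### Chosen shuffle witnesses -/

def chooseφ {γ : SPerm (n + m)} (hsh : IsShuffleB α β γ) : Fin n → Fin (n + m) :=
  Classical.choose hsh

def chooseψ {γ : SPerm (n + m)} (hsh : IsShuffleB α β γ) : Fin m → Fin (n + m) :=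
  Classical.choose (Classical.choose_spec hsh)

lemma choose_spec {γ : SPerm (n + m)} (hsh : IsShuffleB α β γ) :
    (∀ a b : Fin n, a < b → chooseφ α β hsh a < chooseφ α β hsh b) ∧
    (∀ a b : Fin m, a < b → chooseψ α β hsh a < chooseψ α β hsh b) ∧
    (∀ i, sval γ (chooseφ α β hsh i) = sval α i) ∧
    (∀ j, sval γ (chooseψ α β hsh j) =
      sval β j + (if 0 < sval β j then (n : ℤ) else -(n : ℤ))) ∧
    (∀ t, (∃ i, chooseφ α β hsh i = t) ∨ (∃ j, chooseψ α β hsh j = t)) :=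
  Classical.choose_spec (Classical.choose_spec hsh)

end Merge

end ShuffleAux

/-- For signed permutations `α ∈ B_n`, `β ∈ B_m`,
`F^B_{Des(α)}(X) · F^B_{Des(β)}(X) = Σ_{γ ∈ α ⧢ β} F^B_{Des(γ)}(X)`. -/
theorem FB_product_signed_shuffle (M n m : ℕ) (α : SPerm n) (β : SPerm m) :
    FB ℤ M n (desB α) id * FB ℤ M m (desB β) id =
      ∑ γ ∈ Finset.univ.filter (fun γ : SPerm (n + m) => IsShuffleB α β γ),
        FB ℤ M (n + m) (desB γ) id := by
  classical
  unfold FB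
  rw [Finset.sum_mul_sum]
  rw [← Finset.sum_product']
  rw [Finset.sum_sigma']
  refine Finset.sum_nbij'
    (fun x => ⟨mergePerm α β x.1 x.2, mergeSeq β x.1 x.2⟩)
    (fun y => if hsh : IsShuffleB α β y.1 then
        (fun i => y.2 (chooseφ α β hsh i), fun j => y.2 (chooseψ α β hsh j))
      else (fun _ => 0, fun _ => 0))
    ?_ ?_ ?_ ?_ ?_
  · -- forward map lands in the target
    intro x hx
    rw [Finset.mem_product, Finset.mem_filter, Finset.mem_filter] at hx
    obtain ⟨⟨-, hg⟩, -, hh⟩ := hx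
    rw [Finset.mem_sigma, Finset.mem_filter, Finset.mem_filter]
    exact ⟨⟨Finset.mem_univ _, mergePerm_isShuffle α β hg hh⟩,
      Finset.mem_univ _, mergeSeq_seqOKB α β hg hh⟩
  · -- backward map lands in the source
    intro y hy
    rw [Finset.mem_sigma, Finset.mem_filter, Finset.mem_filter] at hy
    obtain ⟨⟨-, hsh⟩, -, hk⟩ := hy
    simp only [dif_pos hsh]
    obtain ⟨w1, w2, w3, w4, w5⟩ := choose_spec α β hsh
    rw [Finset.mem_product, Finset.mem_filter, Finset.mem_filter]
    refine ⟨⟨Finset.mem_univ _, ?_⟩, Finset.mem_univ _, ?_⟩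
    · exact seqOKB_pullback (γ := y.fst) (π := α) (φ := chooseφ α β hsh) w1
        (fun a b hab => by rw [w3 b, w3 a]; exact hab)
        (fun a ha => by rw [w3 a]; exact ha) hk
    · exact seqOKB_pullback (γ := y.fst) (π := β) (φ := chooseψ α β hsh) w2
        (fun a b hab => by
          rw [w4 b, w4 a]
          exact (bshift_lt_iff (sval_ne_zero β b) (sval_ne_zero β a)).2 hab)
        (fun a ha => by rw [w4 a]; exact (bshift_neg_iff (sval_ne_zero β a)).2 ha) hk
  · -- left inverse
    intro x hx
    rw [Finset.mem_product, Finset.mem_filter, Finset.mem_filter] at hx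
    obtain ⟨⟨-, hg⟩, -, hh⟩ := hx
    have hsh : IsShuffleB α β (mergePerm α β x.1 x.2) := mergePerm_isShuffle α β hg hh
    simp only [dif_pos hsh]
    obtain ⟨w1, w2, w3, w4, w5⟩ := choose_spec α β hsh
    obtain ⟨hφeq, hψeq⟩ := shuffle_witness_unique α β w1 w2 w3 w4 w5
      (fun _ _ hab => mergeEquiv_inl_lt α β hg hab)
      (fun _ _ hab => mergeEquiv_inr_lt β hh hab)
      (fun i => sval_mergePerm_inl α β x.1 x.2 i)
      (fun j => sval_mergePerm_inr α β x.1 x.2 j)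
      (fun t => mergeEquiv_cover β.2 x.1 x.2 t)
    refine Prod.ext ?_ ?_
    · funext i
      show mergeSeq β x.1 x.2 (chooseφ α β hsh i) = x.1 i
      rw [congrFun hφeq i]
      rw [mergeSeq_apply]
      rfl
    · funext j
      show mergeSeq β x.1 x.2 (chooseψ α β hsh j) = x.2 j
      rw [congrFun hψeq j]
      rw [mergeSeq_apply]
      rfl
  · -- right inverse
    intro y hy
    rw [Finset.mem_sigma, Finset.mem_filter, Finset.mem_filter] at hy
    obtain ⟨⟨-, hsh⟩, -, hk⟩ := hy
    obtain ⟨γ, k⟩ := y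
    simp only [dif_pos hsh]
    obtain ⟨w1, w2, w3, w4, w5⟩ := choose_spec α β hsh
    obtain ⟨h1, h2⟩ := merge_right_inv α β hk w1 w2 w3 w4 w5
    exact Sigma.mk.inj_iff.mpr ⟨h1, heq_of_eq h2⟩
  · -- values agree
    intro x hx
    simp only [id_eq]
    rw [← Equiv.prod_comp (mergeEquiv β.2 x.1 x.2)
      (fun t => (X (mergeSeq β x.1 x.2 t) : MvPolynomial (Fin (M + 1)) ℤ))]
    simp only [mergeSeq_apply]
    rw [Fintype.prod_sum_type]
    simp only [Sum.elim_inl, Sum.elim_inr]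
end

section
/- For any partition λ of 2n with empty 2-core, the q-domino function satisfies G_λ(X; q) = Σ_{T ∈ SDT(λ)} q^{sp(T)} F^B_{Des(T)}(X): the generating function of semistandard domino tableaux weighted by q^{spin} expands positively in Chow's fundamental quasisymmetric functions indexed by descent sets of standard domino tableaux. -/
open MvPolynomial Finset Equiv

attribute [local instance] Classical.propDecidable

/-! ### Auxiliary development -/

namespace DomAux

open MvPolynomial Finset

variable {μ : YoungDiagram} {M n : ℕ}

/-- row of a cell -/
def ro (c : ↥μ.cells) : ℕ := (c : ℕ × ℕ).1
/-- column of a cell -/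
def co (c : ↥μ.cells) : ℕ := (c : ℕ × ℕ).2

noncomputable def rp (m : ↥μ.cells → ↥μ.cells) (c : ↥μ.cells) : ↥μ.cells :=
  if ro c + co c < ro (m c) + co (m c) then c else m c

noncomputable def reps (m : ↥μ.cells → ↥μ.cells) : Finset ↥μ.cells :=
  univ.filter fun c => ro c + co c < ro (m c) + co (m c)

section pairing

variable {m : ↥μ.cells → ↥μ.cells} (hp : IsPairing m)
include hp

theorem mm (c : ↥μ.cells) : m (m c) = c := (hp c).2.1

theorem sum_cases (c : ↥μ.cells) :
    ro c + co c + 1 = ro (m c) + co (m c) ∨ ro (m c) + co (m c) + 1 = ro c + co c := by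
  have h := (hp c).2.2
  unfold AdjCell at h
  rcases h with ⟨h1, h2 | h2⟩ | ⟨h1, h2 | h2⟩ <;> simp only [ro, co] <;> omega

theorem mem_reps_iff (c : ↥μ.cells) : c ∈ reps m ↔ ro c + co c < ro (m c) + co (m c) := by
  simp [reps]

theorem not_rep_m {c : ↥μ.cells} (hc : c ∈ reps m) : m c ∉ reps m := by
  rw [mem_reps_iff hp] at hc ⊢
  rw [mm hp]
  omega

theorem rep_of_not_rep {c : ↥μ.cells} (hc : c ∉ reps m) : m c ∈ reps m := by
  rw [mem_reps_iff hp] at hc ⊢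
  rw [mm hp]
  rcases sum_cases hp c with h | h <;> omega

theorem rp_mem (c : ↥μ.cells) : rp m c ∈ reps m := by
  unfold rp
  split
  · rw [mem_reps_iff hp]; assumption
  · exact rep_of_not_rep hp (by rw [mem_reps_iff hp]; assumption)

theorem rp_eq_self {c : ↥μ.cells} (hc : c ∈ reps m) : rp m c = c := by
  rw [mem_reps_iff hp] at hc; unfold rp; split
  · rfl
  · omega

theorem rp_m (c : ↥μ.cells) : rp m (m c) = rp m c := by
  by_cases hc : c ∈ reps m
  · rw [rp_eq_self hp hc]
    have := not_rep_m hp hc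
    rw [mem_reps_iff hp] at this
    unfold rp
    split
    · omega
    · exact mm hp c
  · have h2 := rep_of_not_rep hp hc
    rw [rp_eq_self hp h2]
    rw [mem_reps_iff hp] at hc
    unfold rp
    split
    · omega
    · rfl

theorem rp_dom (c : ↥μ.cells) : c = rp m c ∨ c = m (rp m c) := by
  unfold rp; split
  · exact Or.inl rfl
  · exact Or.inr (mm hp c).symm

/-- The partner of a representative is one step right or one step down. -/
theorem rep_spec {c : ↥μ.cells} (hc : c ∈ reps m) :
    (ro (m c) = ro c ∧ co (m c) = co c + 1) ∨ (ro (m c) = ro c + 1 ∧ co (m c) = co c) := by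
  rw [mem_reps_iff hp] at hc
  have h := (hp c).2.2
  unfold AdjCell at h
  rcases h with ⟨h1, h2 | h2⟩ | ⟨h1, h2 | h2⟩ <;> simp only [ro, co] at * <;> omega

theorem rp_bounds (c : ↥μ.cells) : ro (rp m c) ≤ ro c ∧ ro c ≤ ro (rp m c) + 1 ∧
    co (rp m c) ≤ co c ∧ co c ≤ co (rp m c) + 1 := by
  rcases rp_dom hp c with h | h
  · rw [← h]; omega
  · have h2 := rep_spec hp (rp_mem hp c)
    have h3 : ro c = ro (m (rp m c)) := by rw [← h]
    have h4 : co c = co (m (rp m c)) := by rw [← h]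
    omega

theorem card_reps (hcard : μ.card = 2 * n) : (reps m).card = n := by
  classical
  have h1 := Finset.card_filter_add_card_filter_not
    (s := (univ : Finset ↥μ.cells)) (p := fun c => c ∈ reps m)
  rw [Finset.filter_univ_mem] at h1
  have h2 : (univ.filter fun c => ¬ c ∈ reps m).card = (reps m).card := by
    apply Finset.card_nbij (i := m)
    · intro a ha
      simp only [Finset.mem_coe, mem_filter, mem_univ, true_and] at ha
      exact rep_of_not_rep hp ha
    · intro a ha b hb hab
      have := congrArg m hab
      rwa [mm hp, mm hp] at this
    · intro b hb
      refine ⟨m b, ?_, mm hp b⟩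
      simp only [Finset.coe_filter, Set.mem_setOf_eq, mem_univ, true_and]
      exact not_rep_m hp hb
  have h3 : Fintype.card ↥μ.cells = μ.card := Fintype.card_coe _
  rw [Finset.card_univ] at h1
  omega

end pairing



section nw

theorem cell_up_left (c d : ↥μ.cells) (h : ro c ≤ ro d) : ((ro c, co d) : ℕ × ℕ) ∈ μ.cells := by
  rw [YoungDiagram.mem_cells]
  have hd : (↑d : ℕ × ℕ) ∈ μ := by rw [← YoungDiagram.mem_cells]; exact d.2
  exact μ.up_left_mem h le_rfl (by rwa [(rfl : (↑d : ℕ × ℕ) = (ro d, co d))] at hd)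

theorem nw_SDT {T : (↥μ.cells → Fin n) × (↥μ.cells → ↥μ.cells)} (hT : IsSDT T)
    {c d : ↥μ.cells} (h1 : ro c ≤ ro d) (h2 : co c ≤ co d) : T.1 c ≤ T.1 d := by
  let e : ↥μ.cells := ⟨(ro c, co d), cell_up_left c d h1⟩
  have ha : T.1 c ≤ T.1 e := hT.2.2.2.1 c e rfl h2
  have hb : T.1 e ≤ T.1 d := hT.2.2.2.2 e d rfl h1
  exact le_trans ha hb

theorem nw_SSDT {T : (↥μ.cells → Fin (M + 1)) × (↥μ.cells → ↥μ.cells)} (hT : IsSSDT T)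
    {c d : ↥μ.cells} (h1 : ro c ≤ ro d) (h2 : co c ≤ co d) : T.1 c ≤ T.1 d := by
  let e : ↥μ.cells := ⟨(ro c, co d), cell_up_left c d h1⟩
  have ha : T.1 c ≤ T.1 e := hT.2.2.1 c e rfl h2
  have hb : T.1 e ≤ T.1 d := by
    rcases eq_or_lt_of_le h1 with h | h
    · have he : e = d := Subtype.ext (Prod.ext h rfl)
      rw [he]
    · rcases hT.2.2.2.1 e d rfl h with h' | h'
      · exact le_of_lt h'
      · rw [h']
        exact le_of_eq (hT.2.1 e).symm
  exact le_trans ha hb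

end nw

section phi

variable {P : (↥μ.cells → Fin n) × (↥μ.cells → ↥μ.cells)} (hP : IsSDT P)
  {g : Fin n → Fin (M + 1)} (hg : seqOKB n (desSDT P) g)

include hP

theorem lab_rp (c : ↥μ.cells) : P.1 (rp P.2 c) = P.1 c := by
  rcases rp_dom hP.1 c with h | h
  · rw [← h]
  · conv_rhs => rw [h]
    exact (hP.2.1 (rp P.2 c)).symm

theorem rep_lab_inj {c d : ↥μ.cells} (hc : c ∈ reps P.2) (hd : d ∈ reps P.2)
    (h : P.1 c = P.1 d) : c = d := by
  rcases hP.2.2.1 c d h with h' | h'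
  · exact h'.symm
  · exact absurd (h' ▸ hd) (not_rep_m hP.1 hc)

theorem rep_lab_surj (hcard : μ.card = 2 * n) (i : Fin n) :
    ∃ c ∈ reps P.2, P.1 c = i := by
  have himg : (reps P.2).image P.1 = univ := by
    apply Finset.eq_univ_of_card
    rw [Finset.card_image_of_injOn (fun a ha b hb hab => rep_lab_inj hP ha hb hab),
      card_reps hP.1 hcard, Fintype.card_fin]
  have : i ∈ (reps P.2).image P.1 := by rw [himg]; exact mem_univ i
  simpa using this

theorem step_col {i j : Fin n} (hij : (i : ℕ) + 1 = (j : ℕ)) {c d : ↥μ.cells}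
    (hc : c ∈ reps P.2) (hd : d ∈ reps P.2) (hci : P.1 c = i) (hdj : P.1 d = j)
    (hnd : ¬ ∀ a b : ↥μ.cells, P.1 a = i → P.1 b = j → ro a < ro b) : co c < co d := by
  push_neg at hnd
  obtain ⟨a, b, ha, hb, hab⟩ := hnd
  by_contra hcd
  push_neg at hcd
  have hbd : b = d ∨ b = P.2 d := hP.2.2.1 d b (by rw [hb, hdj])
  have hrd : ro d ≤ ro b := by
    rcases hbd with rfl | h
    · exact le_rfl
    · have := rep_spec hP.1 hd
      have hb2 : ro b = ro (P.2 d) := by rw [h]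
      omega
  have hca : co c ≤ co a := by
    rcases hP.2.2.1 c a (by rw [ha, hci]) with h | h
    · rw [h]
    · have := rep_spec hP.1 hc
      have ha2 : co a = co (P.2 c) := by rw [h]
      omega
  have hnw : P.1 d ≤ P.1 a := nw_SDT hP (by omega) (by omega)
  rw [ha, hdj] at hnw
  have : (j : ℕ) ≤ (i : ℕ) := hnw
  omega

include hg

theorem gmono (i j : Fin n) (hij : i ≤ j) : g i ≤ g j := by
  obtain ⟨k, hk⟩ : ∃ k, (j : ℕ) = (i : ℕ) + k := ⟨(j : ℕ) - (i : ℕ), by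
    have : (i : ℕ) ≤ (j : ℕ) := hij
    omega⟩
  clear hij
  induction k generalizing j with
  | zero => exact le_of_eq (congrArg g (Fin.ext (by omega)))
  | succ k ih =>
    have hkn : (i : ℕ) + k < n := by have := j.isLt; omega
    exact le_trans (ih ⟨(i : ℕ) + k, hkn⟩ rfl)
      ((hg.1 ⟨(i : ℕ) + k, hkn⟩ j (by show (i : ℕ) + k + 1 = (j : ℕ); omega)).1)

theorem chain_col (hcard : μ.card = 2 * n) :
    ∀ k : ℕ, ∀ i j : Fin n, (j : ℕ) = (i : ℕ) + k → g i = g j →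
    ∀ c d : ↥μ.cells, c ∈ reps P.2 → d ∈ reps P.2 → P.1 c = i → P.1 d = j →
      co c + k ≤ co d := by
  intro k
  induction k with
  | zero =>
    intro i j hij hgij c d hc hd hci hdj
    have : c = d := rep_lab_inj hP hc hd (by rw [hci, hdj]; exact Fin.ext (by omega))
    rw [this]
    omega
  | succ k ih =>
    intro i j hij hgij c d hc hd hci hdj
    have hkn : (i : ℕ) + k < n := by have := j.isLt; omega
    set j' : Fin n := ⟨(i : ℕ) + k, hkn⟩ with hj'
    obtain ⟨c', hc', hc'l⟩ := rep_lab_surj hP hcard j'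
    have hg1 : g i = g j' := le_antisymm (gmono hP hg i j' (by show (i:ℕ) ≤ (i:ℕ)+k; omega))
      (hgij ▸ gmono hP hg j' j (by show (i:ℕ)+k ≤ (j:ℕ); omega))
    have hg2 : g j' = g j := by rw [← hg1, hgij]
    have hnd : ¬ ∀ a b : ↥μ.cells, P.1 a = j' → P.1 b = j → ro a < ro b := by
      intro hD
      have hdes : (j : ℕ) ∈ desSDT P := by
        unfold desSDT
        rw [mem_filter, mem_range]
        exact ⟨j.isLt, Or.inr ⟨j', j, by show (i:ℕ)+k+1 = (j:ℕ); omega, rfl, hD⟩⟩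
      have := (hg.1 j' j (by show (i:ℕ)+k+1 = (j:ℕ); omega)).2 hdes
      rw [hg2] at this
      exact lt_irrefl _ this
    have hstep : co c' < co d := step_col hP (by show (i:ℕ)+k+1 = (j:ℕ); omega)
      hc' hd hc'l hdj hnd
    have hih : co c + k ≤ co c' := ih i j' rfl hg1 c c' hc hc' hci hc'l
    omega

end phi


section phi2

variable {P : (↥μ.cells → Fin n) × (↥μ.cells → ↥μ.cells)} (hP : IsSDT P)
  {g : Fin n → Fin (M + 1)} (hg : seqOKB n (desSDT P) g)

theorem cell_ext {c d : ↥μ.cells} (h1 : ro c = ro d) (h2 : co c = co d) : c = d :=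
  Subtype.ext (Prod.ext h1 h2)

include hP hg

theorem rank_eq (hcard : μ.card = 2 * n) {c : ↥μ.cells} (hc : c ∈ reps P.2) :
    ((P.1 c : ℕ)) = ((reps P.2).filter fun d =>
      g (P.1 d) < g (P.1 c) ∨ (g (P.1 d) = g (P.1 c) ∧ co d < co c)).card := by
  have hiff : ∀ d ∈ reps P.2,
      ((g (P.1 d) < g (P.1 c) ∨ (g (P.1 d) = g (P.1 c) ∧ co d < co c)) ↔ P.1 d < P.1 c) := by
    intro d hd
    constructor
    · rintro (h | ⟨h1, h2⟩)
      · by_contra hcon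
        push_neg at hcon
        exact absurd h (not_lt.mpr (gmono hP hg _ _ hcon))
      · rcases lt_trichotomy (P.1 d) (P.1 c) with h | h | h
        · exact h
        · exfalso
          have := rep_lab_inj hP hd hc h
          rw [this] at h2
          exact lt_irrefl _ h2
        · exfalso
          have hk : (P.1 c : ℕ) < (P.1 d : ℕ) := h
          have := chain_col hP hg hcard ((P.1 d : ℕ) - (P.1 c : ℕ)) (P.1 c) (P.1 d)
            (by omega) h1.symm c d hc hd rfl rfl
          omega
    · intro h
      have hle := gmono hP hg _ _ (le_of_lt h)
      rcases eq_or_lt_of_le hle with he | hl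
      · refine Or.inr ⟨he, ?_⟩
        have hk : (P.1 d : ℕ) < (P.1 c : ℕ) := h
        have := chain_col hP hg hcard ((P.1 c : ℕ) - (P.1 d : ℕ)) (P.1 d) (P.1 c)
          (by omega) he d c hd hc rfl rfl
        omega
      · exact Or.inl hl
  rw [filter_congr hiff]
  have hcd : ((reps P.2).filter fun d => P.1 d < P.1 c).card
      = (Finset.range ((P.1 c : ℕ))).card := by
    apply Finset.card_nbij (i := fun d => ((P.1 d : ℕ)))
    · intro a ha
      rw [Finset.mem_coe, mem_filter] at ha
      exact Finset.mem_range.mpr ha.2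
    · intro a ha b hb hab
      simp only [Finset.coe_filter, Set.mem_setOf_eq, mem_filter] at ha hb
      exact rep_lab_inj hP ha.1 hb.1 (Fin.ext hab)
    · intro t ht
      simp only [Finset.coe_range, Set.mem_Iio] at ht
      have htn : t < n := lt_trans ht (P.1 c).isLt
      obtain ⟨d, hd, hdl⟩ := rep_lab_surj hP hcard ⟨t, htn⟩
      refine ⟨d, ?_, ?_⟩
      · simp only [Finset.coe_filter, Set.mem_setOf_eq, mem_filter]
        refine ⟨hd, ?_⟩
        rw [hdl]
        exact Fin.mk_lt_of_lt_val ht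
      · show ((P.1 d : ℕ)) = t
        rw [hdl]
  rw [hcd, Finset.card_range]

theorem phi_SSDT (hcard : μ.card = 2 * n) :
    IsSSDT ((fun c => g (P.1 c), P.2) :
      (↥μ.cells → Fin (M + 1)) × (↥μ.cells → ↥μ.cells)) := by
  refine ⟨hP.1, fun c => congrArg g (hP.2.1 c),
    fun c d h1 h2 => gmono hP hg _ _ (hP.2.2.2.1 c d h1 h2), ?_, ?_⟩
  · -- column condition
    intro c d h2 h1
    have hle : P.1 c ≤ P.1 d := hP.2.2.2.2 c d h2 (le_of_lt h1)
    rcases eq_or_lt_of_le hle with he | hlt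
    · rcases hP.2.2.1 c d he with h' | h'
      · exfalso; rw [h'] at h1; exact lt_irrefl _ h1
      · exact Or.inr h'
    · by_cases hgl : g (P.1 c) < g (P.1 d)
      · exact Or.inl hgl
      exfalso
      have hge : g (P.1 c) = g (P.1 d) := le_antisymm (gmono hP hg _ _ hlt.le) (not_lt.mp hgl)
      have hrmem := rp_mem hP.1 c
      have hsmem := rp_mem hP.1 d
      have hrl : P.1 (rp P.2 c) = P.1 c := lab_rp hP c
      have hsl : P.1 (rp P.2 d) = P.1 d := lab_rp hP d
      have hk : (P.1 c : ℕ) < (P.1 d : ℕ) := hlt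
      have hchain : co (rp P.2 c) + ((P.1 d : ℕ) - (P.1 c : ℕ)) ≤ co (rp P.2 d) :=
        chain_col hP hg hcard _ (P.1 c) (P.1 d) (by omega) hge _ _ hrmem hsmem
          (by rw [hrl]) (by rw [hsl])
      have hbr := rp_bounds hP.1 c
      have hbs := rp_bounds hP.1 d
      have h2' : co c = co d := h2
      have h1' : ro c < ro d := h1
      have e1 : co c = co (rp P.2 c) + 1 := by omega
      have e2 : co (rp P.2 d) = co d := by omega
      have e3 : (P.1 d : ℕ) = (P.1 c : ℕ) + 1 := by omega
      have hcr : c ≠ rp P.2 c := by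
        intro h
        rw [← h] at e1
        omega
      have hcmr : c = P.2 (rp P.2 c) := (rp_dom hP.1 c).resolve_left hcr
      have hcco : co c = co (P.2 (rp P.2 c)) := by rw [← hcmr]
      have hcro : ro c = ro (P.2 (rp P.2 c)) := by rw [← hcmr]
      rcases rep_spec hP.1 hrmem with ⟨hA, hB⟩ | ⟨hA, hB⟩
      swap
      · omega
      -- r horizontal, ro c = ro r
      have hnd : ¬ ∀ a b : ↥μ.cells, P.1 a = P.1 c → P.1 b = P.1 d → ro a < ro b := by
        intro hD
        have hdes : ((P.1 d : ℕ)) ∈ desSDT P := by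
          unfold desSDT
          rw [mem_filter, mem_range]
          exact ⟨(P.1 d).isLt, Or.inr ⟨P.1 c, P.1 d, by omega, rfl, hD⟩⟩
        have := (hg.1 (P.1 c) (P.1 d) (by omega)).2 hdes
        rw [hge] at this
        exact lt_irrefl _ this
      push_neg at hnd
      obtain ⟨x, y, hx, hy, hxy⟩ := hnd
      have hxd : x = rp P.2 c ∨ x = P.2 (rp P.2 c) := hP.2.2.1 (rp P.2 c) x (by rw [hx, hrl])
      have hrox : ro x = ro (rp P.2 c) := by
        rcases hxd with h | h
        · rw [h]
        · rw [h]; omega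
      have hyd : y = rp P.2 d ∨ y = P.2 (rp P.2 d) := hP.2.2.1 (rp P.2 d) y (by rw [hy, hsl])
      have hsspec := rep_spec hP.1 hsmem
      have hroy : ro (rp P.2 d) ≤ ro y := by
        rcases hyd with h | h
        · rw [h]
        · have h2 : ro y = ro (P.2 (rp P.2 d)) := by rw [h]
          omega
      rcases rp_dom hP.1 d with hds | hds
      · have : ro d = ro (rp P.2 d) := by rw [← hds]
        omega
      · rcases hsspec with ⟨hA2, hB2⟩ | ⟨hA2, hB2⟩
        · have : co d = co (P.2 (rp P.2 d)) := by rw [← hds]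
          omega
        · have hrod : ro d = ro (P.2 (rp P.2 d)) := by rw [← hds]
          have hsc : rp P.2 d = c := cell_ext (by omega) (by omega)
          rw [hsc] at hsl
          have := congrArg Fin.val hsl
          omega
  · -- zero clause
    intro c hc00 hvert
    have npos : 0 < n := (P.1 c).pos
    obtain ⟨e, he, he0⟩ := rep_lab_surj hP hcard ⟨0, npos⟩
    have hro : ro c = 0 := by show (c : ℕ × ℕ).1 = 0; rw [hc00]
    have hco : co c = 0 := by show (c : ℕ × ℕ).2 = 0; rw [hc00]
    have hle : P.1 c ≤ P.1 e := nw_SDT hP (by omega) (by omega)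
    have hc0 : P.1 c = ⟨0, npos⟩ := by
      rw [he0] at hle
      exact Fin.ext (by exact Nat.le_zero.mp hle)
    have hdes : (0 : ℕ) ∈ desSDT P := by
      unfold desSDT
      rw [mem_filter, mem_range]
      refine ⟨npos, Or.inl ⟨rfl, c, ?_, hvert⟩⟩
      rw [hc0]
    have hpos := hg.2 ⟨0, npos⟩ rfl hdes
    show g (P.1 c) ≠ 0
    rw [hc0]
    exact ne_of_gt hpos

end phi2


section std

theorem keylex {B a b x y : ℕ} (hx : x < B) (hy : y < B) :
    a * B + x < b * B + y ↔ (a < b ∨ (a = b ∧ x < y)) := by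
  constructor
  · intro h
    rcases Nat.lt_trichotomy a b with h' | h' | h'
    · exact Or.inl h'
    · subst h'
      exact Or.inr ⟨rfl, by omega⟩
    · exfalso
      have hm : (b + 1) * B ≤ a * B := Nat.mul_le_mul_right B h'
      rw [add_mul, one_mul] at hm
      omega
  · rintro (h | ⟨rfl, h⟩)
    · have hm : (a + 1) * B ≤ b * B := Nat.mul_le_mul_right B h
      rw [add_mul, one_mul] at hm
      omega
    · omega

theorem colB (c : ↥μ.cells) : co c < μ.card + 1 := by
  have hc : (↑c : ℕ × ℕ) ∈ μ := by rw [← YoungDiagram.mem_cells]; exact c.2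
  have hsub : ({ro c} ×ˢ Finset.range (co c + 1)) ⊆ μ.cells := by
    intro x hx
    rw [Finset.mem_product, Finset.mem_singleton, Finset.mem_range] at hx
    rw [YoungDiagram.mem_cells]
    have hx2 : (x.1, x.2) ∈ μ := μ.up_left_mem (le_of_eq hx.1) (by omega : x.2 ≤ co c)
      (by rwa [(rfl : (↑c : ℕ × ℕ) = (ro c, co c))] at hc)
    rwa [Prod.mk.eta] at hx2
  have hcard2 := Finset.card_le_card hsub
  rw [Finset.card_product, Finset.card_singleton, Finset.card_range, one_mul] at hcard2
  have hcc : μ.cells.card = μ.card := rfl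
  omega

end std

/-- lexicographic key of a cell: (value, column). -/
noncomputable def dkey (T : (↥μ.cells → Fin (M + 1)) × (↥μ.cells → ↥μ.cells))
    (c : ↥μ.cells) : ℕ := (T.1 c : ℕ) * (μ.card + 1) + co c

/-- rank of a representative cell among representatives, by key. -/
noncomputable def drank (T : (↥μ.cells → Fin (M + 1)) × (↥μ.cells → ↥μ.cells))
    (c : ↥μ.cells) : ℕ := ((reps T.2).filter fun d => dkey T d < dkey T c).card

section std2

variable {T : (↥μ.cells → Fin (M + 1)) × (↥μ.cells → ↥μ.cells)} (hT : IsSSDT T)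

include hT

theorem T_rp (c : ↥μ.cells) : T.1 (rp T.2 c) = T.1 c := by
  rcases rp_dom hT.1 c with h | h
  · rw [← h]
  · conv_rhs => rw [h]
    exact (hT.2.1 (rp T.2 c)).symm

omit hT in
theorem key_lt_iff (c d : ↥μ.cells) :
    dkey T c < dkey T d ↔
      ((T.1 c : ℕ) < (T.1 d : ℕ) ∨ ((T.1 c : ℕ) = (T.1 d : ℕ) ∧ co c < co d)) :=
  keylex (colB c) (colB d)

theorem key_inj {c d : ↥μ.cells} (hc : c ∈ reps T.2) (hd : d ∈ reps T.2)
    (h : dkey T c = dkey T d) : c = d := by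
  have h1 : ¬ dkey T c < dkey T d := by omega
  have h2 : ¬ dkey T d < dkey T c := by omega
  rw [key_lt_iff] at h1 h2
  push_neg at h1 h2
  have hval : (T.1 c : ℕ) = (T.1 d : ℕ) := by omega
  have hcol : co c = co d := by
    have := h1.2 hval
    have := h2.2 hval.symm
    omega
  rcases Nat.lt_trichotomy (ro c) (ro d) with hr | hr | hr
  · rcases hT.2.2.2.1 c d hcol hr with h' | h'
    · have : (T.1 c : ℕ) < (T.1 d : ℕ) := h'
      omega
    · exact absurd (h' ▸ hd) (not_rep_m hT.1 hc)
  · exact cell_ext hr hcol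
  · rcases hT.2.2.2.1 d c hcol.symm hr with h' | h'
    · have : (T.1 d : ℕ) < (T.1 c : ℕ) := h'
      omega
    · exact absurd (h' ▸ hc) (not_rep_m hT.1 hd)

omit hT in
theorem rank_lt_n (hcard : μ.card = 2 * n) {c : ↥μ.cells} (hc : c ∈ reps T.2)
    (hp : IsPairing T.2) : drank T c < n := by
  have hss : ((reps T.2).filter fun d => dkey T d < dkey T c) ⊂ reps T.2 :=
    (Finset.ssubset_iff_of_subset (filter_subset _ _)).mpr ⟨c, hc, by simp⟩
  have := Finset.card_lt_card hss
  rwa [card_reps hp hcard] at this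

omit hT in
theorem rank_mono {c d : ↥μ.cells} (hc : c ∈ reps T.2) (hd : d ∈ reps T.2)
    (h : dkey T c < dkey T d) : drank T c < drank T d := by
  apply Finset.card_lt_card
  rw [Finset.ssubset_iff_of_subset]
  · exact ⟨c, by simp [mem_filter, hc, h], by simp⟩
  · intro x hx
    rw [mem_filter] at hx ⊢
    exact ⟨hx.1, by omega⟩

theorem rank_inj {c d : ↥μ.cells} (hc : c ∈ reps T.2) (hd : d ∈ reps T.2)
    (h : drank T c = drank T d) : c = d := by
  rcases Nat.lt_trichotomy (dkey T c) (dkey T d) with h' | h' | h'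
  · have := rank_mono hc hd h'
    omega
  · exact key_inj hT hc hd h'
  · have := rank_mono hd hc h'
    omega

theorem key_of_rank_lt {c d : ↥μ.cells} (hc : c ∈ reps T.2) (hd : d ∈ reps T.2)
    (h : drank T c < drank T d) : dkey T c < dkey T d := by
  rcases Nat.lt_trichotomy (dkey T c) (dkey T d) with h' | h' | h'
  · exact h'
  · rw [key_inj hT hc hd h'] at h
    omega
  · have := rank_mono hd hc h'
    omega

theorem rank_surj (hcard : μ.card = 2 * n) {i : ℕ} (hi : i < n) :
    ∃ c, c ∈ reps T.2 ∧ drank T c = i := by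
  have hsub : (reps T.2).image (drank T) ⊆ Finset.range n := by
    intro x hx
    rw [Finset.mem_image] at hx
    obtain ⟨c, hc, rfl⟩ := hx
    exact Finset.mem_range.mpr (rank_lt_n hcard hc hT.1)
  have hcards : ((reps T.2).image (drank T)).card = n := by
    rw [Finset.card_image_of_injOn (fun a ha b hb hab => rank_inj hT ha hb hab),
      card_reps hT.1 hcard]
  have heq : (reps T.2).image (drank T) = Finset.range n :=
    Finset.eq_of_subset_of_card_le hsub (by rw [hcards, Finset.card_range])
  have : i ∈ (reps T.2).image (drank T) := by rw [heq]; exact Finset.mem_range.mpr hi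
  rw [Finset.mem_image] at this
  obtain ⟨c, hc, hc2⟩ := this
  exact ⟨c, hc, hc2⟩

end std2


section std3

variable {T : (↥μ.cells → Fin (M + 1)) × (↥μ.cells → ↥μ.cells)} (hT : IsSSDT T)

include hT

theorem exists_std (hcard : μ.card = 2 * n) :
    ∃ (Pl : ↥μ.cells → Fin n) (g : Fin n → Fin (M + 1)),
      IsSDT (Pl, T.2) ∧ seqOKB n (desSDT (Pl, T.2)) g ∧ ∀ c, g (Pl c) = T.1 c := by
  have hp : IsPairing T.2 := hT.1
  have hPl : ∀ c : ↥μ.cells, drank T (rp T.2 c) < n :=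
    fun c => rank_lt_n hcard (rp_mem hp c) hp
  set Pl : ↥μ.cells → Fin n := fun c => ⟨drank T (rp T.2 c), hPl c⟩ with hPldef
  choose e he1 he2 using fun i : Fin n => rank_surj hT hcard i.isLt
  set g : Fin n → Fin (M + 1) := fun i => T.1 (e i) with hgdef
  have hPlval : ∀ c, (Pl c : ℕ) = drank T (rp T.2 c) := fun c => rfl
  have hPlrep : ∀ c ∈ reps T.2, (Pl c : ℕ) = drank T c := by
    intro c hc
    rw [hPlval, rp_eq_self hp hc]
  have hePl : ∀ c : ↥μ.cells, e (Pl c) = rp T.2 c := by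
    intro c
    exact rank_inj hT (he1 _) (rp_mem hp c) (by rw [he2 (Pl c), hPlval])
  have hgPl : ∀ c, g (Pl c) = T.1 c := by
    intro c
    rw [hgdef]
    simp only
    rw [hePl c]
    exact T_rp hT c
  -- labels constant on dominoes
  have hlabm : ∀ c, Pl (T.2 c) = Pl c := by
    intro c
    apply Fin.ext
    rw [hPlval, hPlval, rp_m hp]
  -- fibers
  have hfib : ∀ c d : ↥μ.cells, Pl c = Pl d → d = c ∨ d = T.2 c := by
    intro c d h
    have hrr : rp T.2 c = rp T.2 d := by
      apply rank_inj hT (rp_mem hp c) (rp_mem hp d)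
      rw [← hPlval, ← hPlval, h]
    rcases rp_dom hp c with h1 | h1 <;> rcases rp_dom hp d with h2 | h2
    · left; rw [h1, h2, hrr]
    · right; rw [h2, ← hrr, ← h1]
    · -- c = m (rp c), d = rp d = rp c
      right
      rw [h2, ← hrr]
      conv_lhs => rw [← mm hp (rp T.2 c)]
      rw [← h1]
    · left; rw [h1, h2, hrr]
  -- comparison helper: Pl respects key order on representatives
  have hElt : ∀ c d : ↥μ.cells,
      dkey T (rp T.2 c) < dkey T (rp T.2 d) → Pl c < Pl d := by
    intro c d h
    have := rank_mono (rp_mem hp c) (rp_mem hp d) h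
    exact Fin.mk_lt_mk.mpr this
  have hEeq : ∀ c d : ↥μ.cells,
      dkey T (rp T.2 c) = dkey T (rp T.2 d) → Pl c = Pl d := by
    intro c d h
    exact Fin.ext (by rw [hPlval, hPlval, key_inj hT (rp_mem hp c) (rp_mem hp d) h])
  -- row monotonicity
  have hrow : ∀ c d : ↥μ.cells, ro c = ro d → co c ≤ co d → Pl c ≤ Pl d := by
    intro c d h1 h2
    rcases eq_or_lt_of_le h2 with h2e | h2s
    · rw [cell_ext h1 h2e]
    · have hv : T.1 c ≤ T.1 d := hT.2.2.1 c d h1 (le_of_lt h2s)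
      have hbc := rp_bounds hp c
      have hbd := rp_bounds hp d
      have hvc : T.1 (rp T.2 c) = T.1 c := T_rp hT c
      have hvd : T.1 (rp T.2 d) = T.1 d := T_rp hT d
      rcases eq_or_lt_of_le hv with hve | hvs
      · -- equal values, compare columns of reps
        rcases Nat.lt_trichotomy (co (rp T.2 c)) (co (rp T.2 d)) with hco | hco | hco
        · exact le_of_lt (hElt c d ((key_lt_iff _ _).mpr
            (Or.inr ⟨by rw [hvc, hvd, hve], hco⟩)))
        · refine le_of_eq (hEeq c d ?_)
          unfold dkey
          rw [hvc, hvd, hve, hco]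
        · omega
      · exact le_of_lt (hElt c d ((key_lt_iff _ _).mpr
          (Or.inl (by rw [hvc, hvd]; exact hvs))))
  -- column monotonicity
  have hcol : ∀ c d : ↥μ.cells, co c = co d → ro c ≤ ro d → Pl c ≤ Pl d := by
    intro c d h1 h2
    rcases eq_or_lt_of_le h2 with h2e | h2s
    · rw [cell_ext h2e h1]
    · rcases hT.2.2.2.1 c d h1 h2s with h' | h'
      · refine le_of_lt (hElt c d ((key_lt_iff _ _).mpr (Or.inl ?_)))
        rw [T_rp hT c, T_rp hT d]
        exact h'
      · rw [h', hlabm]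
  have hSDT : IsSDT (Pl, T.2) := ⟨hp, hlabm, hfib, hrow, hcol⟩
  refine ⟨Pl, g, hSDT, ⟨?_, ?_⟩, hgPl⟩
  · -- seqOKB clause 1
    intro i j hij
    have hei := he1 i
    have hej := he1 j
    have hkij : dkey T (e i) < dkey T (e j) := by
      apply key_of_rank_lt hT hei hej
      rw [he2 i, he2 j]
      omega
    rw [key_lt_iff] at hkij
    constructor
    · show T.1 (e i) ≤ T.1 (e j)
      have : (T.1 (e i) : ℕ) ≤ (T.1 (e j) : ℕ) := by omega
      exact this
    · intro hdes
      show T.1 (e i) < T.1 (e j)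
      by_contra hcon
      push_neg at hcon
      have hveq : (T.1 (e i) : ℕ) = (T.1 (e j) : ℕ) := by
        have : (T.1 (e j) : ℕ) ≤ (T.1 (e i) : ℕ) := hcon
        omega
      have hcolt : co (e i) < co (e j) := by omega
      -- extract descent data
      unfold desSDT at hdes
      rw [mem_filter] at hdes
      rcases hdes.2 with ⟨h0, -⟩ | ⟨i', j', hij', hj', hD⟩
      · omega
      · have hi' : i' = i := Fin.ext (by omega)
        have hj'2 : j' = j := Fin.ext (by omega)
        rw [hi', hj'2] at hD
        -- labels of e i, e j
        have hlei : Pl (e i) = i := Fin.ext (by rw [hPlrep _ hei, he2])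
        have hlej : Pl (e j) = j := Fin.ext (by rw [hPlrep _ hej, he2])
        have hroij : ro (e i) < ro (e j) := hD (e i) (e j) hlei hlej
        -- intermediate cell
        set x : ↥μ.cells := ⟨(ro (e i), co (e j)), cell_up_left (e i) (e j) (le_of_lt hroij)⟩
          with hx
        have hax : T.1 (e i) ≤ T.1 x := hT.2.2.1 (e i) x rfl (le_of_lt hcolt)
        rcases hT.2.2.2.1 x (e j) rfl hroij with h' | h'
        · have h1 : (T.1 (e i) : ℕ) ≤ (T.1 x : ℕ) := hax
          have h2 : (T.1 x : ℕ) < (T.1 (e j) : ℕ) := h'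
          omega
        · -- e j is partner of x
          have hPlx : Pl x = j := by rw [← hlej, h', hlabm]
          have hlt := hD (e i) x hlei hPlx
          have hx1 : (↑x : ℕ × ℕ).1 = (↑(e i) : ℕ × ℕ).1 := rfl
          omega
  · -- seqOKB clause 2
    intro j hj0 hdes
    unfold desSDT at hdes
    rw [mem_filter] at hdes
    rcases hdes.2 with ⟨-, c, hc0, hvert⟩ | ⟨i', j', hij', hj', -⟩
    swap
    · omega
    -- the cell (0,0)
    have hcmem : (↑c : ℕ × ℕ) ∈ μ := by rw [← YoungDiagram.mem_cells]; exact c.2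
    have hz : ((0, 0) : ℕ × ℕ) ∈ μ.cells := by
      rw [YoungDiagram.mem_cells]
      exact μ.up_left_mem (Nat.zero_le _) (Nat.zero_le _)
        (by rwa [(rfl : (↑c : ℕ × ℕ) = (ro c, co c))] at hcmem)
    set z : ↥μ.cells := ⟨(0, 0), hz⟩ with hzdef
    have hzrep : z ∈ reps T.2 := by
      rw [mem_reps_iff hp]
      rcases sum_cases hp z with h | h
      · omega
      · have : ro z + co z = 0 := rfl
        omega
    have hzrank : drank T z = 0 := by
      unfold drank
      rw [Finset.card_eq_zero, Finset.filter_eq_empty_iff]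
      intro d hd
      rw [key_lt_iff]
      have hvz : (T.1 z : ℕ) ≤ (T.1 d : ℕ) :=
        nw_SSDT hT (Nat.zero_le _) (Nat.zero_le _)
      have hcoz : co z = 0 := rfl
      rintro (h | ⟨h1, h2⟩) <;> omega
    -- rp of c is z
    have hrpz : rp T.2 c = z := by
      apply rank_inj hT (rp_mem hp c) hzrep
      rw [hzrank, ← hPlval, hc0]
    -- z is vertical
    have hzvert : co (T.2 z) = co z := by
      rcases rp_dom hp c with h | h
      · rw [h, hrpz] at hvert
        exact hvert
      · have hc2 : c = T.2 z := by rw [h, hrpz]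
        have hvert' : co (T.2 c) = co c := hvert
        rw [hc2, mm hp] at hvert'
        exact hvert'.symm
    have hzne : T.1 z ≠ 0 := hT.2.2.2.2 z rfl hzvert
    -- conclude
    have hej := he1 j
    have hejz : e j = z := by
      apply rank_inj hT hej hzrep
      rw [he2 j, hzrank, hj0]
    show 0 < g j
    rw [hgdef]
    simp only
    rw [hejz]
    exact Fin.pos_iff_ne_zero.mpr hzne

end std3

end DomAux

open DomAux

/-- For `λ ⊢ 2n` (empty 2-core), the `q`-domino function
expands positively in Chow's fundamental quasisymmetric functions:
`G_λ(X; q) = Σ_{T ∈ SDT(λ)} q^{sp(T)} F^B_{Des(T)}(X)`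
(powers `q^{v/2}` are recorded in the group algebra `ℤ[q^ℚ]`). -/
theorem Gdom_eq_sum_FB (M n : ℕ) (lam : YoungDiagram) (h : lam.card = 2 * n) :
    Gdom M lam =
      ∑ T ∈ Finset.univ.filter
          (fun T : (↥lam.cells → Fin n) × (↥lam.cells → ↥lam.cells) => IsSDT T),
        MvPolynomial.C (qspin (nvert T.2)) *
          FB (AddMonoidAlgebra ℤ ℚ) M n (desSDT T) id := by
  classical
  have hRHS : (∑ T ∈ Finset.univ.filter
          (fun T : (↥lam.cells → Fin n) × (↥lam.cells → ↥lam.cells) => IsSDT T),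
        MvPolynomial.C (qspin (nvert T.2)) *
          FB (AddMonoidAlgebra ℤ ℚ) M n (desSDT T) id)
      = ∑ p ∈ (Finset.univ.filter
          (fun T : (↥lam.cells → Fin n) × (↥lam.cells → ↥lam.cells) => IsSDT T)).sigma
            (fun P => Finset.univ.filter (seqOKB n (desSDT P))),
          MvPolynomial.C (qspin (nvert p.1.2)) * ∏ i, X (p.2 i) := by
    rw [Finset.sum_sigma]
    apply Finset.sum_congr rfl
    intro P _
    rw [FB, Finset.mul_sum]
    simp only [id_eq]
  rw [hRHS, Gdom]
  symm
  apply Finset.sum_bij (i := fun p _ =>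
    ((fun c => p.2 (p.1.1 c), p.1.2) :
      (↥lam.cells → Fin (M + 1)) × (↥lam.cells → ↥lam.cells)))
  · -- membership
    intro p hp
    rw [Finset.mem_sigma, Finset.mem_filter, Finset.mem_filter] at hp
    rw [Finset.mem_filter]
    exact ⟨Finset.mem_univ _, phi_SSDT hp.1.2 hp.2.2 h⟩
  · -- injectivity
    rintro ⟨P, g⟩ hmem ⟨P', g'⟩ hmem' heq
    rw [Finset.mem_sigma, Finset.mem_filter, Finset.mem_filter] at hmem hmem'
    obtain ⟨⟨-, hP⟩, -, hg⟩ := hmem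
    obtain ⟨⟨-, hP'⟩, -, hg'⟩ := hmem'
    have hP : IsSDT P := hP
    have hg : seqOKB n (desSDT P) g := hg
    have hP' : IsSDT P' := hP'
    have hg' : seqOKB n (desSDT P') g' := hg'
    simp only [Prod.mk.injEq] at heq
    obtain ⟨hlab, h2⟩ := heq
    have hfun : ∀ d, g (P.1 d) = g' (P'.1 d) := fun d => congrFun hlab d
    have hkey : ∀ x ∈ reps P.2, P.1 x = P'.1 x := by
      intro x hx
      have hx' : x ∈ reps P'.2 := h2 ▸ hx
      apply Fin.ext
      rw [rank_eq hP hg h hx, rank_eq hP' hg' h hx', h2]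
      congr 1
      apply Finset.filter_congr
      intro d hd
      rw [hfun d, hfun x]
    have hP1 : P.1 = P'.1 := by
      funext c
      have e1 : P.1 (rp P.2 c) = P.1 c := lab_rp hP c
      have e2' : P'.1 (rp P.2 c) = P'.1 c := by rw [h2]; exact lab_rp hP' c
      rw [← e1, ← e2', hkey _ (rp_mem hP.1 c)]
    have hgg : g = g' := by
      funext i
      obtain ⟨c, hc, hcl⟩ := rep_lab_surj hP h i
      rw [← hcl, hfun c, ← hP1]
    have hPP : P = P' := Prod.ext hP1 h2
    subst hPP
    rw [hgg]
  · -- surjectivity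
    intro T hT
    rw [Finset.mem_filter] at hT
    obtain ⟨Pl, g, hSDT, hseq, hgc⟩ := exists_std hT.2 h
    refine ⟨⟨(Pl, T.2), g⟩, ?_, ?_⟩
    · rw [Finset.mem_sigma, Finset.mem_filter, Finset.mem_filter]
      exact ⟨⟨Finset.mem_univ _, hSDT⟩, Finset.mem_univ _, hseq⟩
    · exact Prod.ext (funext fun c => hgc c) rfl
  · -- values agree
    intro p hp
    rw [Finset.mem_sigma, Finset.mem_filter, Finset.mem_filter] at hp
    obtain ⟨⟨-, hP⟩, -, hg⟩ := hp
    congr 1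
    symm
    apply Finset.prod_nbij (i := p.1.1)
    · intro a _
      exact Finset.mem_univ _
    · intro a ha b hb hab
      rw [Finset.mem_coe] at ha hb
      exact rep_lab_inj hP ha hb hab
    · intro t _
      obtain ⟨c, hc, hcl⟩ := rep_lab_surj hP h t
      exact ⟨c, by rw [Finset.mem_coe]; exact hc, hcl⟩
    · intro a _
      rfl
end
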